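/- arXiv:2306.01178 — 10 statements merged into one kernel-verified Lean document; each statement's English description precedes it below -/
import Mathlib

section
/- If V < ∞ (which forces U < ∞), then 2V − U² ≥ 2U/r. -/
open MeasureTheory Set
open scoped ENNReal

/-!
Write `e = η / x²` on `(0, r)`. By symmetry of the square `(0, r)²` about its diagonal,
`U² = 2 ∫ e(x) ∫_{y > x} e(y) dy dx`, and since `η ≤ 1` the inner integral is at most
`∫_x^r y⁻² dy = 1/x - 1/r`. Hence `U² + 2U/r ≤ 2 ∫ e(x)/x dx = 2V`; as `V < ∞`, `U²` is finite
and can be moved to the other side.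
-/

section Order

variable {α : Type*} [TopologicalSpace α] [LinearOrder α] [OrderClosedTopology α]
  [MeasurableSpace α] [BorelSpace α] {μ : Measure α}

theorem measurable_setLIntegral_Ioi (f : α → ℝ≥0∞) :
    Measurable fun x => ∫⁻ y in Ioi x, f y ∂μ :=
  Antitone.measurable fun _ _ hxy => lintegral_mono_set (Ioi_subset_Ioi hxy)

theorem setLIntegral_Iio_add_setLIntegral_Ioi [NullSingletonClass μ] (f : α → ℝ≥0∞) (x : α) :
    ∫⁻ y in Iio x, f y ∂μ + ∫⁻ y in Ioi x, f y ∂μ = ∫⁻ y, f y ∂μ := by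
  rw [setLIntegral_congr Ioi_ae_eq_Ici, ← compl_Iio, lintegral_add_compl _ measurableSet_Iio]

theorem lintegral_mul_setLIntegral_Iio_eq [SecondCountableTopology α] [SFinite μ]
    {f : α → ℝ≥0∞} (hf : Measurable f) :
    ∫⁻ x, f x * ∫⁻ y in Iio x, f y ∂μ ∂μ = ∫⁻ x, f x * ∫⁻ y in Ioi x, f y ∂μ ∂μ := by
  have hsymm : ∀ x y, f x * (Iio x).indicator f y = f y * (Ioi y).indicator f x := by
    intro x y
    simp only [indicator_apply, mem_Iio, mem_Ioi]
    split_ifs <;> simp [mul_comm]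
  have hmeas : Measurable (Function.uncurry fun x y => f y * (Ioi y).indicator f x) :=
    (hf.comp measurable_snd).mul <|
      Measurable.ite (measurableSet_lt measurable_snd measurable_fst) (hf.comp measurable_fst)
        measurable_const
  simp_rw [← lintegral_indicator measurableSet_Iio, ← lintegral_indicator measurableSet_Ioi,
    ← lintegral_const_mul _ (hf.indicator measurableSet_Iio),
    ← lintegral_const_mul _ (hf.indicator measurableSet_Ioi), hsymm]
  exact lintegral_lintegral_swap hmeas.aemeasurable

theorem sq_lintegral_eq_two_mul_lintegral_mul_setLIntegral_Ioi [SecondCountableTopology α]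
    [SFinite μ] [NullSingletonClass μ] {f : α → ℝ≥0∞} (hf : Measurable f) :
    (∫⁻ x, f x ∂μ) ^ 2 = 2 * ∫⁻ x, f x * ∫⁻ y in Ioi x, f y ∂μ ∂μ := by
  calc (∫⁻ x, f x ∂μ) ^ 2 = ∫⁻ x, f x * ∫⁻ y, f y ∂μ ∂μ := by
        rw [sq, lintegral_mul_const _ hf]
    _ = ∫⁻ x, f x * ∫⁻ y in Iio x, f y ∂μ ∂μ + ∫⁻ x, f x * ∫⁻ y in Ioi x, f y ∂μ ∂μ := by
        rw [← lintegral_add_right _ (g := fun x => f x * ∫⁻ y in Ioi x, f y ∂μ)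
          (hf.mul (measurable_setLIntegral_Ioi f))]
        refine lintegral_congr fun x => ?_
        rw [← mul_add, setLIntegral_Iio_add_setLIntegral_Ioi]
    _ = 2 * ∫⁻ x, f x * ∫⁻ y in Ioi x, f y ∂μ ∂μ := by
        rw [lintegral_mul_setLIntegral_Iio_eq hf, two_mul]

end Order

theorem setLIntegral_Ioo_inv_sq {a b : ℝ} (ha : 0 < a) (hab : a ≤ b) :
    ∫⁻ y in Ioo a b, ENNReal.ofReal (y ^ 2)⁻¹ = ENNReal.ofReal (a⁻¹ - b⁻¹) := by
  have hderiv : ∀ y ∈ uIcc a b, HasDerivAt (fun y : ℝ => -y⁻¹) (y ^ 2)⁻¹ y := by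
    intro y hy
    rw [uIcc_of_le hab] at hy
    have := (hasDerivAt_inv (ha.trans_le hy.1).ne').neg
    rwa [neg_neg] at this
  have hcont : ContinuousOn (fun y : ℝ => (y ^ 2)⁻¹) (Icc a b) :=
    (continuousOn_pow 2).inv₀ fun y hy => (pow_pos (ha.trans_le hy.1) 2).ne'
  rw [← ofReal_integral_eq_lintegral_ofReal
      ((hcont.integrableOn_compact isCompact_Icc).mono_set Ioo_subset_Icc_self)
      ((ae_restrict_mem measurableSet_Ioo).mono fun y hy => by positivity),
    ← integral_Ioc_eq_integral_Ioo, ← intervalIntegral.integral_of_le hab,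
    intervalIntegral.integral_eq_sub_of_hasDerivAt hderiv (hcont.intervalIntegrable_of_Icc hab),
    neg_sub_neg]

theorem setLIntegral_Ioi_indicator_div_sq_le {r x : ℝ} {η : ℝ → ℝ}
    (hη : ∀ᵐ y ∂(volume.restrict (Ioo 0 r)), η y ≤ 1) (hx : x ∈ Ioo 0 r) :
    ∫⁻ y in Ioi x, (Ioo 0 r).indicator (fun y => ENNReal.ofReal (η y / y ^ 2)) y
      ≤ ENNReal.ofReal (x⁻¹ - r⁻¹) := by
  have hη' : ∀ᵐ y ∂(volume.restrict (Ioo x r)), η y ≤ 1 :=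
    ae_restrict_of_ae_restrict_of_subset (Ioo_subset_Ioo_left hx.1.le) hη
  rw [setLIntegral_indicator measurableSet_Ioo, ← setLIntegral_Ioo_inv_sq hx.1 hx.2.le]
  calc ∫⁻ y in Ioo 0 r ∩ Ioi x, ENNReal.ofReal (η y / y ^ 2)
      ≤ ∫⁻ y in Ioo x r, ENNReal.ofReal (η y / y ^ 2) :=
        lintegral_mono_set fun y hy => ⟨hy.2, hy.1.2⟩
    _ ≤ ∫⁻ y in Ioo x r, ENNReal.ofReal (y ^ 2)⁻¹ := by
        refine lintegral_mono_ae (hη'.mono fun y hy => ENNReal.ofReal_le_ofReal ?_)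
        rw [div_eq_mul_inv]
        exact mul_le_of_le_one_left (by positivity) hy

theorem indicator_div_sq_mul_add_le_indicator_div_cube {r : ℝ} {η : ℝ → ℝ}
    (hη : ∀ᵐ y ∂(volume.restrict (Ioo 0 r)), η y ≤ 1) (x : ℝ) :
    (Ioo 0 r).indicator (fun y => ENNReal.ofReal (η y / y ^ 2)) x *
        ((∫⁻ y in Ioi x, (Ioo 0 r).indicator (fun y => ENNReal.ofReal (η y / y ^ 2)) y) +
          ENNReal.ofReal r⁻¹)
      ≤ (Ioo 0 r).indicator (fun y => ENNReal.ofReal (η y / y ^ 3)) x := by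
  by_cases hx : x ∈ Ioo 0 r
  · have htail : (∫⁻ y in Ioi x, (Ioo 0 r).indicator (fun y => ENNReal.ofReal (η y / y ^ 2)) y) +
        ENNReal.ofReal r⁻¹ ≤ ENNReal.ofReal x⁻¹ := by
      calc _ ≤ ENNReal.ofReal (x⁻¹ - r⁻¹) + ENNReal.ofReal r⁻¹ := by
            gcongr
            exact setLIntegral_Ioi_indicator_div_sq_le hη hx
        _ = ENNReal.ofReal x⁻¹ := by
            rw [← ENNReal.ofReal_add (sub_nonneg.2 (inv_anti₀ hx.1 hx.2.le))
              (inv_nonneg.2 (hx.1.trans hx.2).le), sub_add_cancel]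
    rw [indicator_of_mem hx, indicator_of_mem hx]
    calc _ ≤ ENNReal.ofReal (η x / x ^ 2) * ENNReal.ofReal x⁻¹ := by gcongr
      _ = ENNReal.ofReal (η x / x ^ 3) := by
          rw [← ENNReal.ofReal_mul' (inv_nonneg.2 hx.1.le), ← div_eq_mul_inv, div_div, ← pow_succ]
  · rw [indicator_of_notMem hx, zero_mul]
    exact bot_le

/-- Lemma 4.8 (first part) of the paper: for measurable `η : (0,r) → [0,1]`, with
`U = ∫₀^r η(x)/x² dx` and `V = ∫₀^r η(x)/x³ dx` (valued in `[0,∞]`), if `V < ∞`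
then `2V − U² ≥ 2U/r`. -/
theorem two_V_sub_U_sq_ge
    (r : ℝ) (hr : 0 < r) (η : ℝ → ℝ) (hmeas : Measurable η)
    (hbd : ∀ᵐ x ∂(volume.restrict (Ioo 0 r)), η x ∈ Icc (0 : ℝ) 1)
    (U V : ℝ≥0∞)
    (hU : U = ∫⁻ x in Ioo 0 r, ENNReal.ofReal (η x / x ^ 2))
    (hV : V = ∫⁻ x in Ioo 0 r, ENNReal.ofReal (η x / x ^ 3))
    (hVfin : V ≠ ⊤) :
    2 * U / ENNReal.ofReal r ≤ 2 * V - U ^ 2 := by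
  set e := (Ioo 0 r).indicator fun x => ENNReal.ofReal (η x / x ^ 2)
  have he : Measurable e :=
    (hmeas.div (measurable_id.pow_const 2)).ennreal_ofReal.indicator measurableSet_Ioo
  have hUe : U = ∫⁻ x, e x := by rw [hU, lintegral_indicator measurableSet_Ioo]
  have key : U ^ 2 + 2 * U / ENNReal.ofReal r ≤ 2 * V := by
    calc U ^ 2 + 2 * U / ENNReal.ofReal r
        = 2 * ∫⁻ x, e x * ((∫⁻ y in Ioi x, e y) + ENNReal.ofReal r⁻¹) := by
          simp_rw [mul_add]
          rw [lintegral_add_left (f := fun x => e x * ∫⁻ y in Ioi x, e y)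
              (he.mul (measurable_setLIntegral_Ioi e)),
            lintegral_mul_const _ he, hUe,
            sq_lintegral_eq_two_mul_lintegral_mul_setLIntegral_Ioi he,
            ENNReal.ofReal_inv_of_pos hr, div_eq_mul_inv]
          ring
      _ ≤ 2 * V := by
          rw [hV, ← lintegral_indicator measurableSet_Ioo]
          gcongr with x
          exact indicator_div_sq_mul_add_le_indicator_div_cube (hbd.mono fun _ h => h.2) x
  have hUsq : U ^ 2 ≠ ⊤ :=
    ne_top_of_le_ne_top (ENNReal.mul_ne_top ENNReal.ofNat_ne_top hVfin) (le_self_add.trans key)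
  exact ENNReal.le_sub_of_add_le_left hUsq key
end

section
/- If W < ∞ (which forces U < ∞ and V < ∞) and U > 0, then W ≥ U³/12 + V²/U. -/
open MeasureTheory Set
open scoped ENNReal Pointwise

/-!
The substitution `t = 1/x` turns `U`, `V`, `W` into the mass `u`, first moment `v` and second
moment `w` of the density `ζ t = η (1/t)` on `(1/r, ∞)`, which takes values in `[0, 1]`. So
`W - V²/U` is `u` times the variance of `ζ`, and by the bathtub principle a density bounded by `1`
with mass `u` has variance at least that of the indicator of an interval of length `u`, i.e.
`u²/12`. Concretely, with `m = v/u` and `φ t = (t - m)² - (u/2)²`, which is `≤ 0` exactly on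
`I = [m - u/2, m + u/2]`, one has `φ ζ ≥ φ 1_I` pointwise; integrating gives
`w - v²/u - u³/4 ≥ ∫_I φ = -u³/6`.
-/

theorem setIntegral_le_setIntegral_mul_of_mem_Icc {α : Type*} [MeasurableSpace α]
    {μ : Measure α} {s I : Set α} (hI : MeasurableSet I) {φ ζ : α → ℝ}
    (hζ : ∀ᵐ t ∂μ.restrict s, ζ t ∈ Icc 0 1)
    (hφ_nonpos : ∀ t ∈ I, φ t ≤ 0) (hφ_nonneg : ∀ t ∉ I, 0 ≤ φ t)
    (hφ : IntegrableOn φ I μ) (hφζ : IntegrableOn (fun t => φ t * ζ t) s μ) :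
    ∫ t in I, φ t ∂μ ≤ ∫ t in s, φ t * ζ t ∂μ := by
  have hshrink : ∫ t in I, φ t ∂μ ≤ ∫ t in s ∩ I, φ t ∂μ := by
    have := setIntegral_mono_set hφ.neg
      (ae_restrict_of_forall_mem hI fun t ht => neg_nonneg.2 (hφ_nonpos t ht))
      (inter_subset_right (s := s)).eventuallyLE
    simp only [Pi.neg_apply, integral_neg] at this
    linarith
  have hpointwise : ∀ᵐ t ∂μ.restrict s, I.indicator φ t ≤ φ t * ζ t := by
    filter_upwards [hζ] with t ⟨hζ0, hζ1⟩
    by_cases ht : t ∈ I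
    · rw [indicator_of_mem ht]
      nlinarith [hφ_nonpos t ht]
    · rw [indicator_of_notMem ht]
      exact mul_nonneg (hφ_nonneg t ht) hζ0
  calc ∫ t in I, φ t ∂μ ≤ ∫ t in s ∩ I, φ t ∂μ := hshrink
    _ = ∫ t in s, I.indicator φ t ∂μ := (setIntegral_indicator hI).symm
    _ ≤ ∫ t in s, φ t * ζ t ∂μ :=
      integral_mono_ae ((integrable_indicator_iff hI).2 hφ).integrableOn hφζ hpointwise

theorem integral_Icc_sub_sq_sub_sq (m a : ℝ) (ha : 0 ≤ a) :
    ∫ t in Icc (m - a) (m + a), ((t - m) ^ 2 - a ^ 2) = -(4 / 3 * a ^ 3) := by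
  rw [integral_Icc_eq_integral_Ioc, ← intervalIntegral.integral_of_le (by linarith),
    intervalIntegral.integral_comp_sub_right (fun t => t ^ 2 - a ^ 2)]
  simp only [sub_sub_cancel_left, add_sub_cancel_left, intervalIntegral.intervalIntegrable_pow,
    intervalIntegrable_const, intervalIntegral.integral_sub, integral_pow, Nat.reduceAdd,
    Nat.cast_ofNat, intervalIntegral.integral_const, sub_neg_eq_add, smul_eq_mul]
  ring

theorem cube_div_twelve_add_sq_div_le_integral_sq_mul {s : Set ℝ} {ζ : ℝ → ℝ}
    (hζ : ∀ᵐ t ∂volume.restrict s, ζ t ∈ Icc 0 1) (h0 : IntegrableOn ζ s)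
    (h1 : IntegrableOn (fun t => t * ζ t) s) (h2 : IntegrableOn (fun t => t ^ 2 * ζ t) s) :
    (∫ t in s, ζ t) ^ 3 / 12 + (∫ t in s, t * ζ t) ^ 2 / ∫ t in s, ζ t ≤
      ∫ t in s, t ^ 2 * ζ t := by
  set u := ∫ t in s, ζ t
  set v := ∫ t in s, t * ζ t
  set w := ∫ t in s, t ^ 2 * ζ t
  have hu : 0 ≤ u := integral_nonneg_of_ae (hζ.mono fun t ht => ht.1)
  set m := v / u
  set a := u / 2
  have ha : 0 ≤ a := by positivity
  have hexpand : ∀ t, ((t - m) ^ 2 - a ^ 2) * ζ t =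
      t ^ 2 * ζ t - 2 * m * (t * ζ t) + (m ^ 2 - a ^ 2) * ζ t := fun t => by ring
  have hφζ : IntegrableOn (fun t => ((t - m) ^ 2 - a ^ 2) * ζ t) s := by
    simp only [hexpand]
    exact (h2.sub (h1.const_mul _)).add (h0.const_mul _)
  have hφζ_eq : ∫ t in s, ((t - m) ^ 2 - a ^ 2) * ζ t =
      w - 2 * m * v + (m ^ 2 - a ^ 2) * u := by
    simp only [hexpand]
    rw [integral_add ?_ (h0.const_mul _), integral_sub h2 (h1.const_mul _),
      integral_const_mul, integral_const_mul]
    exact h2.sub (h1.const_mul _)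
  have hbathtub := setIntegral_le_setIntegral_mul_of_mem_Icc (I := Icc (m - a) (m + a))
    (φ := fun t => (t - m) ^ 2 - a ^ 2) measurableSet_Icc hζ
    (fun t ht => by nlinarith [ht.1, ht.2])
    (fun t ht => by
      rw [mem_Icc, not_and_or, not_le, not_le] at ht
      rcases ht with ht | ht <;> nlinarith)
    (Continuous.integrableOn_Icc (by fun_prop)) hφζ
  rw [hφζ_eq, integral_Icc_sub_sq_sub_sq m a ha] at hbathtub
  -- for `u = 0` this holds with Lean's `v ^ 2 / 0 = 0`
  have hm : 2 * m * v - m ^ 2 * u = v ^ 2 / u := by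
    rcases hu.eq_or_lt with h | h
    · simp [m, ← h]
    · simp only [m]; field_simp; ring
  have ha2 : a ^ 2 * u = u ^ 3 / 4 := by simp only [a]; ring
  have ha3 : a ^ 3 = u ^ 3 / 8 := by simp only [a]; ring
  linarith

theorem lintegral_Ioo_zero_eq_lintegral_Ioi_inv {r : ℝ} (hr : 0 < r) (g : ℝ → ℝ≥0∞) :
    ∫⁻ x in Ioo 0 r, g x = ∫⁻ t in Ioi r⁻¹, ENNReal.ofReal (t ^ 2)⁻¹ * g t⁻¹ := by
  have himage : Inv.inv '' Ioi r⁻¹ = Ioo 0 r := by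
    rw [image_inv_eq_inv, inv_Ioi₀ (inv_pos.2 hr), inv_inv]
  have hderiv : ∀ t ∈ Ioi r⁻¹, HasDerivWithinAt Inv.inv (-(t ^ 2)⁻¹) (Ioi r⁻¹) t :=
    fun t ht => (hasDerivAt_inv (ne_of_gt (lt_trans (inv_pos.2 hr) ht))).hasDerivWithinAt
  rw [← himage, lintegral_image_eq_lintegral_abs_deriv_mul measurableSet_Ioi hderiv
    inv_injective.injOn]
  refine setLIntegral_congr_fun measurableSet_Ioi fun t _ => ?_
  rw [abs_neg, abs_of_nonneg (by positivity)]

theorem ae_restrict_Ioi_inv_of_ae_restrict_Ioo {r : ℝ} (hr : 0 < r) {p : ℝ → Prop}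
    (hp : MeasurableSet {x | p x}) (h : ∀ᵐ x ∂volume.restrict (Ioo 0 r), p x) :
    ∀ᵐ t ∂volume.restrict (Ioi r⁻¹), p t⁻¹ := by
  have hnull :
      ∫⁻ t in Ioi r⁻¹, ENNReal.ofReal (t ^ 2)⁻¹ * {x | p x}ᶜ.indicator 1 t⁻¹ = 0 := by
    rw [← lintegral_Ioo_zero_eq_lintegral_Ioi_inv hr, lintegral_indicator_one hp.compl]
    exact ae_iff.1 h
  have hmeas :
      Measurable fun t : ℝ => ENNReal.ofReal (t ^ 2)⁻¹ * {x | p x}ᶜ.indicator 1 t⁻¹ :=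
    (ENNReal.measurable_ofReal.comp (measurable_id.pow_const 2).inv).mul
      ((measurable_const.indicator hp.compl).comp measurable_inv)
  rw [lintegral_eq_zero_iff hmeas] at hnull
  filter_upwards [hnull, ae_restrict_mem measurableSet_Ioi] with t ht hrt
  have hpos : ENNReal.ofReal (t ^ 2)⁻¹ ≠ 0 := by
    have : 0 < t := lt_trans (inv_pos.2 hr) hrt
    positivity
  simpa [hpos] using ht

theorem lintegral_Ioo_zero_ofReal_div_pow_add_two {r : ℝ} (hr : 0 < r) (f : ℝ → ℝ)
    (k : ℕ) :
    ∫⁻ x in Ioo 0 r, ENNReal.ofReal (f x / x ^ (k + 2)) =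
      ∫⁻ t in Ioi r⁻¹, ENNReal.ofReal (t ^ k * f t⁻¹) := by
  rw [lintegral_Ioo_zero_eq_lintegral_Ioi_inv hr]
  refine setLIntegral_congr_fun measurableSet_Ioi fun t ht => ?_
  have ht0 : t ≠ 0 := (lt_trans (inv_pos.2 hr) ht).ne'
  rw [← ENNReal.ofReal_mul (by positivity)]
  congr 1
  rw [inv_pow, div_inv_eq_mul, pow_add]
  field_simp

theorem integrableOn_Ioi_pow_mul_of_le {a : ℝ} (ha : 0 < a) {ζ : ℝ → ℝ}
    (hζ : AEStronglyMeasurable ζ (volume.restrict (Ioi a))) {j k : ℕ} (hjk : j ≤ k)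
    (h : IntegrableOn (fun t => t ^ k * ζ t) (Ioi a)) :
    IntegrableOn (fun t => t ^ j * ζ t) (Ioi a) := by
  refine (h.norm.const_mul (a ^ (k - j))⁻¹).mono'
    ((continuous_pow j).aestronglyMeasurable.mul hζ) ?_
  filter_upwards [ae_restrict_mem measurableSet_Ioi] with t (ht : a < t)
  have ht0 : 0 < t := ha.trans ht
  have hpow : t ^ j ≤ (a ^ (k - j))⁻¹ * t ^ k := by
    rw [le_inv_mul_iff₀ (by positivity), ← pow_mul_pow_sub t hjk, mul_comm]
    gcongr
  rw [norm_mul, norm_mul, Real.norm_of_nonneg (by positivity : 0 ≤ t ^ j),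
    Real.norm_of_nonneg (by positivity : 0 ≤ t ^ k), ← mul_assoc]
  exact mul_le_mul_of_nonneg_right hpow (norm_nonneg _)

theorem ofReal_cube_div_twelve_add_sq_div_le {u v w : ℝ} (hu : 0 < u) (hv : 0 ≤ v)
    (h : u ^ 3 / 12 + v ^ 2 / u ≤ w) :
    ENNReal.ofReal u ^ 3 / 12 + ENNReal.ofReal v ^ 2 / ENNReal.ofReal u ≤
      ENNReal.ofReal w := by
  rw [← ENNReal.ofReal_pow hu.le, ← ENNReal.ofReal_pow hv, ← ENNReal.ofReal_ofNat 12,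
    ← ENNReal.ofReal_div_of_pos (by norm_num), ← ENNReal.ofReal_div_of_pos hu,
    ← ENNReal.ofReal_add (by positivity) (by positivity)]
  exact ENNReal.ofReal_le_ofReal h

/-- Lemma 4.8 (second part) of the paper: for measurable `η : (0,r) → [0,1]`, with
`U = ∫₀^r η(x)/x² dx`, `V = ∫₀^r η(x)/x³ dx` and `W = ∫₀^r η(x)/x⁴ dx` (valued in
`[0,∞]`), if `W < ∞` and `U > 0` then `W ≥ U³/12 + V²/U`. -/
theorem W_ge_U_cubed_add_V_sq_div_U
    (r : ℝ) (hr : 0 < r) (η : ℝ → ℝ) (hmeas : Measurable η)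
    (hbd : ∀ᵐ x ∂(volume.restrict (Ioo 0 r)), η x ∈ Icc (0 : ℝ) 1)
    (U V W : ℝ≥0∞)
    (hU : U = ∫⁻ x in Ioo 0 r, ENNReal.ofReal (η x / x ^ 2))
    (hV : V = ∫⁻ x in Ioo 0 r, ENNReal.ofReal (η x / x ^ 3))
    (hW : W = ∫⁻ x in Ioo 0 r, ENNReal.ofReal (η x / x ^ 4))
    (hWfin : W ≠ ⊤) (hUpos : 0 < U) :
    U ^ 3 / 12 + V ^ 2 / U ≤ W := by
  set ζ : ℝ → ℝ := fun t => η t⁻¹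
  have hr' : 0 < r⁻¹ := inv_pos.2 hr
  have hζ : ∀ᵐ t ∂volume.restrict (Ioi r⁻¹), ζ t ∈ Icc 0 1 :=
    ae_restrict_Ioi_inv_of_ae_restrict_Ioo hr (hmeas measurableSet_Icc) hbd
  have hζm : AEStronglyMeasurable ζ (volume.restrict (Ioi r⁻¹)) :=
    (hmeas.comp measurable_inv).aestronglyMeasurable
  have hnonneg (k : ℕ) : 0 ≤ᵐ[volume.restrict (Ioi r⁻¹)] fun t => t ^ k * ζ t := by
    filter_upwards [hζ, ae_restrict_mem measurableSet_Ioi] with t ht (hrt : r⁻¹ < t)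
    exact mul_nonneg (pow_nonneg (hr'.trans hrt).le k) ht.1
  have h2 : IntegrableOn (fun t => t ^ 2 * ζ t) (Ioi r⁻¹) := by
    refine (lintegral_ofReal_ne_top_iff_integrable
      ((continuous_pow 2).aestronglyMeasurable.mul hζm) (hnonneg 2)).1 ?_
    rwa [hW, lintegral_Ioo_zero_ofReal_div_pow_add_two hr η 2] at hWfin
  have hint (k : ℕ) (hk : k ≤ 2) : IntegrableOn (fun t => t ^ k * ζ t) (Ioi r⁻¹) :=
    integrableOn_Ioi_pow_mul_of_le hr' hζm hk h2
  have hmoment (k : ℕ) (hk : k ≤ 2) :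
      ∫⁻ x in Ioo 0 r, ENNReal.ofReal (η x / x ^ (k + 2)) =
        ENNReal.ofReal (∫ t in Ioi r⁻¹, t ^ k * ζ t) := by
    rw [lintegral_Ioo_zero_ofReal_div_pow_add_two hr,
      ofReal_integral_eq_lintegral_ofReal (hint k hk) (hnonneg k)]
  obtain rfl : U = ENNReal.ofReal (∫ t in Ioi r⁻¹, ζ t) := by
    simpa using hU.trans (hmoment 0 (by norm_num))
  obtain rfl : V = ENNReal.ofReal (∫ t in Ioi r⁻¹, t * ζ t) := by
    simpa using hV.trans (hmoment 1 (by norm_num))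
  obtain rfl : W = ENNReal.ofReal (∫ t in Ioi r⁻¹, t ^ 2 * ζ t) := hW.trans (hmoment 2 le_rfl)
  refine ofReal_cube_div_twelve_add_sq_div_le (ENNReal.ofReal_pos.1 hUpos)
    (by simpa using integral_nonneg_of_ae (hnonneg 1)) ?_
  exact cube_div_twelve_add_sq_div_le_integral_sq_mul hζ
    (by simpa using hint 0 (by norm_num)) (by simpa using hint 1 (by norm_num)) h2
end

section
/- Let P, Q, U₋, U₊, V₋, V₊ be real numbers with P > 0, Q > 0, U₋ > 0, U₊ > 0, and suppose U₋ + U₊ = P + Q, 2V₋ − 2V₊ = P² − Q², 2V₋ > U₋², and 2V₊ > U₊². Then 2(U₋³ + U₊³) + 3U₋(2V₋ − U₋²) + 3U₊(2V₊ − U₊²) > 2P³ + 2Q³. -/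
theorem cusp_key_excess_eq_weighted_gaps (P Q Um Up Vm Vp : ℝ)
    (hsum : Um + Up = P + Q) (hV : 2 * Vm - 2 * Vp = P ^ 2 - Q ^ 2) :
    2 * (Um ^ 3 + Up ^ 3) + 3 * Um * (2 * Vm - Um ^ 2) + 3 * Up * (2 * Vp - Up ^ 2)
        - (2 * P ^ 3 + 2 * Q ^ 3) =
      3 * (P * (2 * Vp - Up ^ 2) + Q * (2 * Vm - Um ^ 2)) := by
  linear_combination 3 * (Um - Q) * hV
    + (6 * Vp - Up ^ 2 + (2 * P - Q + Um) * (Up + P + Q - Um)) * hsum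

theorem cusp_A_positive_key_inequality_general
    (P Q Um Up Vm Vp : ℝ)
    (hP : 0 < P) (hQ : 0 < Q)
    (hsum : Um + Up = P + Q)
    (hV : 2 * Vm - 2 * Vp = P ^ 2 - Q ^ 2)
    (hGm : Um ^ 2 < 2 * Vm) (hGp : Up ^ 2 < 2 * Vp) :
    2 * P ^ 3 + 2 * Q ^ 3 <
      2 * (Um ^ 3 + Up ^ 3) + 3 * Um * (2 * Vm - Um ^ 2) + 3 * Up * (2 * Vp - Up ^ 2) := by
  have hgaps : 0 < P * (2 * Vp - Up ^ 2) + Q * (2 * Vm - Um ^ 2) :=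
    add_pos (mul_pos hP (sub_pos.2 hGp)) (mul_pos hQ (sub_pos.2 hGm))
  linarith [cusp_key_excess_eq_weighted_gaps P Q Um Up Vm Vp hsum hV]

/-- The elementary inequality from the proof of Lemma 4.7 of the paper, the key step in
showing that the fourth-order coefficient `A` governing the Pearcey scaling at a cusp is
strictly positive. -/
theorem cusp_A_positive_key_inequality
    (P Q Um Up Vm Vp : ℝ)
    (hP : 0 < P) (hQ : 0 < Q) (hUm : 0 < Um) (hUp : 0 < Up)
    (hsum : Um + Up = P + Q)
    (hV : 2 * Vm - 2 * Vp = P ^ 2 - Q ^ 2)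
    (hGm : Um ^ 2 < 2 * Vm) (hGp : Up ^ 2 < 2 * Vp) :
    2 * P ^ 3 + 2 * Q ^ 3 <
      2 * (Um ^ 3 + Up ^ 3) + 3 * Um * (2 * Vm - Um ^ 2) + 3 * Up * (2 * Vp - Up ^ 2) :=
  cusp_A_positive_key_inequality_general P Q Um Up Vm Vp hP hQ hsum hV hGm hGp
end

section
/- Let t_c > 0 and z_c ∈ (E₋, E₊) with −t_c < z_c < 0, and assume the normalized cusp equations: z_c + t_c·f₀(z_c)/(f₀(z_c)+1) = 0; 1 + t_c·f₀′(z_c)/(f₀(z_c)+1)² = 0; and f₀″(z_c) − 2·f₀′(z_c)²/(f₀(z_c)+1) = 0. For z ∈ (E₋, E₊) with −t_c < z < 0 define G(z) = ∫_{−∞}^{E₋} log(z−x)·ρ₀(x) dx + ∫_{E₊}^{∞} log(x−z)·ρ₀(x) dx + (z+t_c)·log(z+t_c) − z·log(−z) + z·log(β/(1−β)), and set A = t_c⁴·∫_ℝ ρ₀(x)/(4(z_c−x)⁴) dx − t_c⁴/(12(t_c+z_c)³) − t_c⁴/(12(−z_c)³). Then G is four times differentiable at z_c, with G′(z_c) =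 G″(z_c) = G‴(z_c) = 0 and G⁗(z_c) = −24·t_c^{−4}·A. -/
/-!
On the gap `(E₋, E₊)` the two boundary integrals of `G` merge into the logarithmic potential
`∫ log |z - x| ρ(x) dx`. For `w` near `z` and `x` in the support of `ρ`, `w - x` stays in a fixed
annulus around `0`, where every kernel smooth off `0` is bounded; so one may differentiate under
the integral sign. The potential has derivative `S₁`, and the moments
`S_k(z) = ∫ ρ(x) / (z - x)^k dx` satisfy `S_k' = -k S_{k+1}`. Hence
`G' = S₁ + log (z + t_c) - log (-z) + log (β / (1 - β))`, `G'' = -S₂ + …`, `G''' = 2 S₃ + …`,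
`G'''' = -6 S₄ + …`. As `f₀ = β / (1 - β) · exp S₁`, the three cusp equations determine
`f₀(z_c) = -z_c / (z_c + t_c)`, `S₂(z_c)` and `S₃(z_c)` in closed form, and these are exactly the
values making `G'`, `G''`, `G'''` vanish at `z_c`; `G''''(z_c)` is `A` rewritten.
-/

open MeasureTheory Set Filter Topology
open scoped ContDiff

theorem integrable_of_hasCompactSupport_of_ae_norm_le {X E : Type*} [TopologicalSpace X]
    [MeasurableSpace X] {μ : Measure X} [IsFiniteMeasureOnCompacts μ] [NormedAddCommGroup E]
    {f : X → E} (hmeas : AEStronglyMeasurable f μ) (hsupp : HasCompactSupport f) {C : ℝ}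
    (hbd : ∀ᵐ x ∂μ, ‖f x‖ ≤ C) : Integrable f μ :=
  (integrableOn_iff_integrable_of_support_subset (subset_tsupport f)).1 <|
    Measure.integrableOn_of_bounded hsupp.isCompact.measure_lt_top.ne hmeas (ae_restrict_of_ae hbd)

theorem integral_eq_integral_Iic_add_integral_Ici {E : Type*} [NormedAddCommGroup E]
    [NormedSpace ℝ E] {μ : Measure ℝ} {f : ℝ → E} {a b : ℝ} (hab : a < b) (hf : Integrable f μ)
    (h0 : ∀ᵐ x ∂μ, x ∈ Ioo a b → f x = 0) :
    ∫ x, f x ∂μ = (∫ x in Iic a, f x ∂μ) + ∫ x in Ici b, f x ∂μ := by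
  have hcompl : (Ioo a b)ᶜ = Iic a ∪ Ici b := by ext x; simp [imp_iff_not_or]
  rw [← setIntegral_eq_integral_of_ae_compl_eq_zero (s := (Ioo a b)ᶜ) (by simpa using h0), hcompl,
    setIntegral_union (Iic_disjoint_Ici.2 (not_le.2 hab)) measurableSet_Ici hf.integrableOn
      hf.integrableOn]

theorem Set.EqOn.iteratedDeriv_succ_of_hasDerivAt {𝕜 F : Type*} [NontriviallyNormedField 𝕜]
    [NormedAddCommGroup F] [NormedSpace 𝕜 F] {f g g' : 𝕜 → F} {U : Set 𝕜} {n : ℕ}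
    (hfg : EqOn (iteratedDeriv n f) g U) (hU : IsOpen U) (hg : ∀ z ∈ U, HasDerivAt g (g' z) z) :
    EqOn (iteratedDeriv (n + 1) f) g' U := fun z hz => by
  rw [iteratedDeriv_succ, (hfg.eventuallyEq_of_mem (hU.mem_nhds hz)).deriv_eq]
  exact (hg z hz).deriv

theorem contDiffOn_succ_of_hasDerivAt {𝕜 F : Type*} [NontriviallyNormedField 𝕜]
    [NormedAddCommGroup F] [NormedSpace 𝕜 F] {f g : 𝕜 → F} {U : Set 𝕜} {n : ℕ} (hU : IsOpen U)
    (hf : ∀ z ∈ U, HasDerivAt f (g z) z) (hg : ContDiffOn 𝕜 n g U) :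
    ContDiffOn 𝕜 (n + 1) f U :=
  (contDiffOn_succ_iff_deriv_of_isOpen hU).2
    ⟨fun z hz => (hf z hz).differentiableAt.differentiableWithinAt, by simp,
      hg.congr fun z hz => (hf z hz).deriv⟩

theorem hasDerivAt_inv_pow (k : ℕ) {t : ℝ} (ht : t ≠ 0) :
    HasDerivAt (fun t => (t ^ k)⁻¹) (-k * (t ^ (k + 1))⁻¹) t := by
  have h := hasDerivAt_zpow (-k) t (Or.inl ht)
  simp only [zpow_neg, zpow_natCast] at h
  refine h.congr_deriv ?_
  rw [show (-(k : ℤ) - 1) = -((k + 1 : ℕ) : ℤ) by push_cast; ring, zpow_neg, zpow_natCast]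
  push_cast
  ring

section Gap

variable {ρ φ φ' : ℝ → ℝ} {a b z : ℝ}

theorem exists_ae_sub_mem_annulus (hsupp : HasCompactSupport ρ)
    (hgap : ∀ᵐ x, x ∈ Ioo a b → ρ x = 0) (hz : z ∈ Ioo a b) :
    ∃ δ > 0, ∃ R, ∀ᵐ x, ρ x ≠ 0 →
      ∀ w ∈ Metric.ball z δ, w - x ∈ Metric.closedBall 0 R \ Metric.ball 0 δ := by
  obtain ⟨R, hR⟩ := hsupp.isCompact.isBounded.subset_closedBall 0
  obtain ⟨hza, hzb⟩ := hz
  obtain ⟨δ, hδ, hδa, hδb⟩ : ∃ δ > 0, 2 * δ ≤ z - a ∧ 2 * δ ≤ b - z :=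
    ⟨min (z - a) (b - z) / 2, half_pos (lt_min (sub_pos.2 hza) (sub_pos.2 hzb)),
      by linarith [min_le_left (z - a) (b - z)], by linarith [min_le_right (z - a) (b - z)]⟩
  refine ⟨δ, hδ, |z| + δ + R, ?_⟩
  filter_upwards [hgap] with x hx hρx w hw
  have hxR : |x| ≤ R := by simpa using hR (subset_tsupport ρ hρx)
  have hxgap : x ≤ a ∨ b ≤ x := by
    by_contra! h
    exact hρx (hx h)
  rw [Metric.mem_ball, Real.dist_eq, abs_sub_lt_iff] at hw
  simp only [Set.mem_sdiff, Metric.mem_closedBall, Metric.mem_ball, dist_zero_right,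
    Real.norm_eq_abs, not_lt]
  constructor
  · rw [abs_le] at hxR ⊢
    constructor <;> linarith [neg_abs_le z, le_abs_self z]
  · rcases hxgap with hxa | hbx
    · exact le_abs.2 (Or.inl (by linarith))
    · exact le_abs.2 (Or.inr (by linarith))

theorem exists_ae_norm_comp_sub_mul_le (hsupp : HasCompactSupport ρ)
    (hgap : ∀ᵐ x, x ∈ Ioo a b → ρ x = 0) (hz : z ∈ Ioo a b) (hφ : ContinuousOn φ {0}ᶜ) :
    ∃ δ > 0, ∃ C, ∀ᵐ x, ∀ w ∈ Metric.ball z δ, ‖φ (w - x) * ρ x‖ ≤ C * ‖ρ x‖ := by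
  obtain ⟨δ, hδ, R, hsub⟩ := exists_ae_sub_mem_annulus hsupp hgap hz
  have hcompact := (isCompact_closedBall (0 : ℝ) R).diff (Metric.isOpen_ball (x := 0) (ε := δ))
  obtain ⟨C, hC⟩ := hcompact.exists_bound_of_continuousOn <|
    hφ.mono fun t ht (h0 : t = 0) => ht.2 (by simpa [h0] using hδ)
  refine ⟨δ, hδ, C, ?_⟩
  filter_upwards [hsub] with x hx w hw
  by_cases hρx : ρ x = 0
  · simp [hρx]
  · rw [norm_mul]
    exact mul_le_mul_of_nonneg_right (hC _ (hx hρx w hw)) (norm_nonneg _)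

theorem aestronglyMeasurable_comp_sub_mul (hρ : AEStronglyMeasurable ρ)
    (hφ : ContinuousOn φ {0}ᶜ) (w : ℝ) : AEStronglyMeasurable (fun x => φ (w - x) * ρ x) :=
  ((measurable_of_continuousOn_compl_singleton 0 hφ).comp
    (measurable_const.sub measurable_id)).aestronglyMeasurable.mul hρ

theorem integrable_comp_sub_mul (hρ : Integrable ρ) (hsupp : HasCompactSupport ρ)
    (hgap : ∀ᵐ x, x ∈ Ioo a b → ρ x = 0) (hz : z ∈ Ioo a b) (hφ : ContinuousOn φ {0}ᶜ) :
    Integrable (fun x => φ (z - x) * ρ x) := by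
  obtain ⟨δ, hδ, C, hC⟩ := exists_ae_norm_comp_sub_mul_le hsupp hgap hz hφ
  exact (hρ.norm.const_mul C).mono' (aestronglyMeasurable_comp_sub_mul hρ.1 hφ z)
    (hC.mono fun x hx => hx z (Metric.mem_ball_self hδ))

theorem hasDerivAt_integral_comp_sub_mul (hρ : Integrable ρ) (hsupp : HasCompactSupport ρ)
    (hgap : ∀ᵐ x, x ∈ Ioo a b → ρ x = 0) (hz : z ∈ Ioo a b)
    (hφ : ∀ t ≠ 0, HasDerivAt φ (φ' t) t) (hφ' : ContinuousOn φ' {0}ᶜ) :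
    HasDerivAt (fun w => ∫ x, φ (w - x) * ρ x) (∫ x, φ' (z - x) * ρ x) z := by
  have hφc : ContinuousOn φ {0}ᶜ := fun t ht => (hφ t ht).continuousAt.continuousWithinAt
  obtain ⟨δ, hδ, R, hsub⟩ := exists_ae_sub_mem_annulus hsupp hgap hz
  obtain ⟨ε, hε, C, hC⟩ := exists_ae_norm_comp_sub_mul_le hsupp hgap hz hφ'
  refine (hasDerivAt_integral_of_dominated_loc_of_deriv_le (bound := fun x => C * ‖ρ x‖)
    (inter_mem (Metric.ball_mem_nhds z hδ) (Metric.ball_mem_nhds z hε))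
    (Eventually.of_forall (aestronglyMeasurable_comp_sub_mul hρ.1 hφc))
    (integrable_comp_sub_mul hρ hsupp hgap hz hφc)
    (aestronglyMeasurable_comp_sub_mul hρ.1 hφ' z)
    (hC.mono fun x hx w hw => hx w hw.2) (hρ.norm.const_mul C) ?_).2
  filter_upwards [hsub] with x hx w hw
  by_cases hρx : ρ x = 0
  · simpa [hρx] using hasDerivAt_const w (0 : ℝ)
  · have hwx : w - x ≠ 0 := fun h => (hx hρx w hw.1).2 (by simp [h, hδ])
    exact ((hφ _ hwx).comp_sub_const w x).mul_const (ρ x)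

end Gap

noncomputable def stieltjesMoment (ρ : ℝ → ℝ) (k : ℕ) (z : ℝ) : ℝ :=
  ∫ x, ρ x / (z - x) ^ k

/-- Since `Real.log` is `log |·|`, this is the logarithmic potential `∫ log |z - x| ρ(x) dx`. -/
noncomputable def logPotential (ρ : ℝ → ℝ) (z : ℝ) : ℝ :=
  ∫ x, Real.log (z - x) * ρ x

section Moments

variable {ρ : ℝ → ℝ} {a b z : ℝ}

theorem hasDerivAt_stieltjesMoment (hρ : Integrable ρ) (hsupp : HasCompactSupport ρ)
    (hgap : ∀ᵐ x, x ∈ Ioo a b → ρ x = 0) (hz : z ∈ Ioo a b) (k : ℕ) :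
    HasDerivAt (stieltjesMoment ρ k) (-k * stieltjesMoment ρ (k + 1) z) z := by
  have h := hasDerivAt_integral_comp_sub_mul hρ hsupp hgap hz (fun t ht => hasDerivAt_inv_pow k ht)
    (continuousOn_const.mul ((continuousOn_id.pow _).inv₀ fun t ht => pow_ne_zero _ ht))
  have hS : stieltjesMoment ρ k = fun w => ∫ x, ((w - x) ^ k)⁻¹ * ρ x := by
    funext w
    simp only [stieltjesMoment, div_eq_inv_mul]
  rw [hS, stieltjesMoment, ← integral_const_mul]
  simpa only [div_eq_inv_mul, mul_assoc] using h

theorem hasDerivAt_logPotential (hρ : Integrable ρ) (hsupp : HasCompactSupport ρ)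
    (hgap : ∀ᵐ x, x ∈ Ioo a b → ρ x = 0) (hz : z ∈ Ioo a b) :
    HasDerivAt (logPotential ρ) (stieltjesMoment ρ 1 z) z := by
  refine (hasDerivAt_integral_comp_sub_mul hρ hsupp hgap hz (fun t ht => Real.hasDerivAt_log ht)
    continuousOn_inv₀).congr_deriv ?_
  simp [stieltjesMoment, div_eq_inv_mul]

theorem contDiffOn_stieltjesMoment (hρ : Integrable ρ) (hsupp : HasCompactSupport ρ)
    (hgap : ∀ᵐ x, x ∈ Ioo a b → ρ x = 0) (k : ℕ) :
    ContDiffOn ℝ ∞ (stieltjesMoment ρ k) (Ioo a b) := by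
  refine contDiffOn_infty.2 fun n => ?_
  induction n generalizing k with
  | zero =>
    exact contDiffOn_zero.2 fun z hz =>
      (hasDerivAt_stieltjesMoment hρ hsupp hgap hz k).continuousAt.continuousWithinAt
  | succ n ih =>
    exact_mod_cast contDiffOn_succ_of_hasDerivAt isOpen_Ioo
      (fun z hz => hasDerivAt_stieltjesMoment hρ hsupp hgap hz k)
      (contDiffOn_const.mul (ih (k + 1)))

theorem contDiffOn_logPotential (hρ : Integrable ρ) (hsupp : HasCompactSupport ρ)
    (hgap : ∀ᵐ x, x ∈ Ioo a b → ρ x = 0) : ContDiffOn ℝ ∞ (logPotential ρ) (Ioo a b) :=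
  contDiffOn_infty.2 fun n =>
    (contDiffOn_succ_of_hasDerivAt isOpen_Ioo
      (fun z hz => hasDerivAt_logPotential hρ hsupp hgap hz)
      (contDiffOn_infty.1 (contDiffOn_stieltjesMoment hρ hsupp hgap 1) n)).of_le
      (by exact_mod_cast n.le_succ)

theorem logPotential_eq_integral_Iic_add_integral_Ici (hρ : Integrable ρ)
    (hsupp : HasCompactSupport ρ) (hgap : ∀ᵐ x, x ∈ Ioo a b → ρ x = 0) (hz : z ∈ Ioo a b) :
    logPotential ρ z =
      (∫ x in Iic a, Real.log (z - x) * ρ x) + ∫ x in Ici b, Real.log (x - z) * ρ x := by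
  simp_rw [← neg_sub z, Real.log_neg_eq_log]
  exact integral_eq_integral_Iic_add_integral_Ici (hz.1.trans hz.2)
    (integrable_comp_sub_mul hρ hsupp hgap hz Real.continuousOn_log)
    (hgap.mono fun x hx hxab => by simp [hx hxab])

end Moments

/-- The function `G` of the statement, with `c = β / (1 - β)`, once its two boundary integrals are
merged. -/
noncomputable def cuspPotential (ρ : ℝ → ℝ) (t c z : ℝ) : ℝ :=
  logPotential ρ z + (z + t) * Real.log (z + t) - z * Real.log (-z) + z * Real.log c

section CuspPotential

variable {ρ : ℝ → ℝ} {a b t z : ℝ}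

theorem contDiffOn_cuspPotential (hρ : Integrable ρ) (hsupp : HasCompactSupport ρ)
    (hgap : ∀ᵐ x, x ∈ Ioo a b → ρ x = 0) (t c : ℝ) :
    ContDiffOn ℝ ∞ (cuspPotential ρ t c) (Ioo a b ∩ Ioo (-t) 0) := by
  have ht : ∀ w ∈ Ioo a b ∩ Ioo (-t) 0, w + t ≠ 0 := fun w hw => by linarith [hw.2.1]
  have h0 : ∀ w ∈ Ioo a b ∩ Ioo (-t) 0, -w ≠ 0 := fun w hw => by linarith [hw.2.2]
  have hL : ContDiffOn ℝ ∞ (logPotential ρ) (Ioo a b ∩ Ioo (-t) 0) :=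
    (contDiffOn_logPotential hρ hsupp hgap).mono inter_subset_left
  unfold cuspPotential
  fun_prop (disch := assumption)

theorem hasDerivAt_cuspPotential (hρ : Integrable ρ) (hsupp : HasCompactSupport ρ)
    (hgap : ∀ᵐ x, x ∈ Ioo a b → ρ x = 0) (c : ℝ) (hz : z ∈ Ioo a b ∩ Ioo (-t) 0) :
    HasDerivAt (cuspPotential ρ t c)
      (stieltjesMoment ρ 1 z + Real.log (z + t) - Real.log (-z) + Real.log c) z := by
  have ht : z + t ≠ 0 := by linarith [hz.2.1]
  have h0 : z ≠ 0 := by linarith [hz.2.2]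
  have hid := hasDerivAt_id' (x := z)
  have hshift := hid.add_const t
  have h := (((hasDerivAt_logPotential hρ hsupp hgap hz.1).add (hshift.mul (hshift.log ht))).sub
    (hid.mul ((hasDerivAt_neg' (x := z)).log (neg_ne_zero.2 h0)))).add (hid.mul_const (Real.log c))
  refine h.congr_deriv ?_
  field_simp
  ring

theorem iteratedDeriv_cuspPotential (hρ : Integrable ρ) (hsupp : HasCompactSupport ρ)
    (hgap : ∀ᵐ x, x ∈ Ioo a b → ρ x = 0) (c : ℝ) (hz : z ∈ Ioo a b ∩ Ioo (-t) 0) :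
    iteratedDeriv 1 (cuspPotential ρ t c) z =
        stieltjesMoment ρ 1 z + Real.log (z + t) - Real.log (-z) + Real.log c ∧
      iteratedDeriv 2 (cuspPotential ρ t c) z = -stieltjesMoment ρ 2 z + (z + t)⁻¹ - z⁻¹ ∧
      iteratedDeriv 3 (cuspPotential ρ t c) z =
        2 * stieltjesMoment ρ 3 z - ((z + t) ^ 2)⁻¹ + (z ^ 2)⁻¹ ∧
      iteratedDeriv 4 (cuspPotential ρ t c) z =
        -6 * stieltjesMoment ρ 4 z + 2 * ((z + t) ^ 3)⁻¹ - 2 * (z ^ 3)⁻¹ := by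
  set U := Ioo a b ∩ Ioo (-t) 0
  have hU : IsOpen U := isOpen_Ioo.inter isOpen_Ioo
  have hS (k : ℕ) {w : ℝ} (hw : w ∈ U) := hasDerivAt_stieltjesMoment hρ hsupp hgap hw.1 k
  have ht {w : ℝ} (hw : w ∈ U) : w + t ≠ 0 := by linarith [hw.2.1]
  have h0 {w : ℝ} (hw : w ∈ U) : w ≠ 0 := by linarith [hw.2.2]
  have hid (w : ℝ) := hasDerivAt_id' (x := w)
  have hshift (w : ℝ) := (hasDerivAt_id' (x := w)).add_const t
  have e1 : EqOn (iteratedDeriv 1 (cuspPotential ρ t c))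
      (fun w => stieltjesMoment ρ 1 w + Real.log (w + t) - Real.log (-w) + Real.log c) U :=
    EqOn.iteratedDeriv_succ_of_hasDerivAt (n := 0) (g := cuspPotential ρ t c)
      (by simp [EqOn]) hU fun w hw => hasDerivAt_cuspPotential hρ hsupp hgap c hw
  have e2 := e1.iteratedDeriv_succ_of_hasDerivAt
    (g' := fun w => -stieltjesMoment ρ 2 w + (w + t)⁻¹ - w⁻¹) hU fun w hw => by
      have h := ((((hS 1 hw).add ((hshift w).log (ht hw))).sub
        ((hasDerivAt_neg' (x := w)).log (neg_ne_zero.2 (h0 hw)))).add_const (Real.log c))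
      refine h.congr_deriv ?_
      norm_num
  have e3 := e2.iteratedDeriv_succ_of_hasDerivAt
    (g' := fun w => 2 * stieltjesMoment ρ 3 w - ((w + t) ^ 2)⁻¹ + (w ^ 2)⁻¹) hU fun w hw => by
      have h := ((hS 2 hw).neg.add ((hshift w).inv (ht hw))).sub ((hid w).inv (h0 hw))
      refine h.congr_deriv ?_
      norm_num
      field_simp [ht hw, h0 hw]
      ring
  have e4 := e3.iteratedDeriv_succ_of_hasDerivAt
    (g' := fun w => -6 * stieltjesMoment ρ 4 w + 2 * ((w + t) ^ 3)⁻¹ - 2 * (w ^ 3)⁻¹) hU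
    fun w hw => by
      have h := (((hS 3 hw).const_mul 2).sub
        ((hshift w).pow 2 |>.inv (pow_ne_zero 2 (ht hw)))).add
        (((hid w).pow 2).inv (pow_ne_zero 2 (h0 hw)))
      refine h.congr_deriv ?_
      norm_num
      field_simp [ht hw, h0 hw]
      ring
  exact ⟨e1 hz, e2 hz, e3 hz, e4 hz⟩

theorem deriv_const_mul_exp_stieltjesMoment_one (hρ : Integrable ρ)
    (hsupp : HasCompactSupport ρ) (hgap : ∀ᵐ x, x ∈ Ioo a b → ρ x = 0) (hz : z ∈ Ioo a b)
    (c : ℝ) :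
    deriv (fun w => c * Real.exp (stieltjesMoment ρ 1 w)) z =
        -(c * Real.exp (stieltjesMoment ρ 1 z) * stieltjesMoment ρ 2 z) ∧
      deriv (deriv fun w => c * Real.exp (stieltjesMoment ρ 1 w)) z =
        c * Real.exp (stieltjesMoment ρ 1 z) *
          (stieltjesMoment ρ 2 z ^ 2 + 2 * stieltjesMoment ρ 3 z) := by
  have hS (k : ℕ) {w : ℝ} (hw : w ∈ Ioo a b) := hasDerivAt_stieltjesMoment hρ hsupp hgap hw k
  have hd : ∀ w ∈ Ioo a b, HasDerivAt (fun w => c * Real.exp (stieltjesMoment ρ 1 w))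
      (-(c * Real.exp (stieltjesMoment ρ 1 w) * stieltjesMoment ρ 2 w)) w := fun w hw =>
    ((hS 1 hw).exp.const_mul c).congr_deriv (by push_cast; ring)
  have hdd : deriv (fun w => c * Real.exp (stieltjesMoment ρ 1 w)) =ᶠ[𝓝 z]
      fun w => -(c * Real.exp (stieltjesMoment ρ 1 w) * stieltjesMoment ρ 2 w) :=
    eventually_of_mem (isOpen_Ioo.mem_nhds hz) fun w hw => (hd w hw).deriv
  refine ⟨(hd z hz).deriv, ?_⟩
  rw [hdd.deriv_eq]
  exact ((((hS 1 hz).exp.const_mul c).mul (hS 2 hz)).neg.congr_deriv (by push_cast; ring)).deriv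

end CuspPotential

/-- With `f₀ = c exp S₁`, `p = S₂`, `q = S₃`, the numbers `u`, `-u p`, `u (p² + 2 q)` are `f₀`,
`f₀'`, `f₀''` at the cusp. -/
theorem derivs_vanish_of_cusp_equations {t z u p q : ℝ} (hzt : 0 < z + t) (hz : z < 0) (hu : 0 < u)
    (h1 : z + t * u / (u + 1) = 0) (h2 : 1 + t * (-(u * p)) / (u + 1) ^ 2 = 0)
    (h3 : u * (p ^ 2 + 2 * q) - 2 * (-(u * p)) ^ 2 / (u + 1) = 0) :
    Real.log u + Real.log (z + t) - Real.log (-z) = 0 ∧ -p + (z + t)⁻¹ - z⁻¹ = 0 ∧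
      2 * q - ((z + t) ^ 2)⁻¹ + (z ^ 2)⁻¹ = 0 := by
  have ht : t ≠ 0 := by linarith
  have hz0 : z ≠ 0 := hz.ne
  have hu_eq : u = -z / (z + t) := by
    field_simp at h1 ⊢
    linarith
  have hu1 : u + 1 = t / (z + t) := by
    rw [hu_eq]
    field_simp
    ring
  rw [hu1] at h2 h3
  subst hu_eq
  have hp : p = -t / (z * (z + t)) := by
    field_simp at h2 ⊢
    linear_combination h2
  subst hp
  refine ⟨?_, ?_, ?_⟩
  · rw [Real.log_div (by linarith) hzt.ne']
    ring
  · field_simp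
    ring
  · field_simp at h3 ⊢
    linear_combination -h3

theorem cusp_G_triple_critical_point_general
    (β : ℝ) (hβ : β ∈ Ioo (0 : ℝ) 1)
    (ρ : ℝ → ℝ) (hmeas : Measurable ρ) (hsupp : HasCompactSupport ρ)
    (hbd : ∀ᵐ x ∂(volume : Measure ℝ), ρ x ∈ Icc (0 : ℝ) 1)
    (Em Ep : ℝ)
    (hgap : ∀ᵐ x ∂(volume : Measure ℝ), x ∈ Ioo Em Ep → ρ x = 0)
    (tc zc : ℝ) (hzc : zc ∈ Ioo Em Ep)
    (hzc' : -tc < zc) (hzc0 : zc < 0)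
    (m₀ : ℝ → ℝ) (hm₀ : m₀ = fun z => ∫ x : ℝ, ρ x / (z - x))
    (f₀ : ℝ → ℝ) (hf₀ : f₀ = fun z => β / (1 - β) * Real.exp (m₀ z))
    (cusp1 : zc + tc * f₀ zc / (f₀ zc + 1) = 0)
    (cusp2 : 1 + tc * deriv f₀ zc / (f₀ zc + 1) ^ 2 = 0)
    (cusp3 : deriv (deriv f₀) zc - 2 * (deriv f₀ zc) ^ 2 / (f₀ zc + 1) = 0)
    (G : ℝ → ℝ)
    (hG : G = fun z =>
      (∫ x in Iic Em, Real.log (z - x) * ρ x) +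
      (∫ x in Ici Ep, Real.log (x - z) * ρ x) +
      (z + tc) * Real.log (z + tc) - z * Real.log (-z) +
      z * Real.log (β / (1 - β)))
    (A : ℝ)
    (hA : A = tc ^ 4 * (∫ x : ℝ, ρ x / (4 * (zc - x) ^ 4)) -
      tc ^ 4 / (12 * (tc + zc) ^ 3) - tc ^ 4 / (12 * (-zc) ^ 3)) :
    ContDiffAt ℝ 4 G zc ∧
    deriv G zc = 0 ∧ iteratedDeriv 2 G zc = 0 ∧ iteratedDeriv 3 G zc = 0 ∧
    iteratedDeriv 4 G zc = -24 / tc ^ 4 * A := by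
  set c := β / (1 - β)
  have hc : 0 < c := div_pos hβ.1 (sub_pos.2 hβ.2)
  have hρ : Integrable ρ := integrable_of_hasCompactSupport_of_ae_norm_le
    hmeas.aestronglyMeasurable hsupp (C := 1)
    (hbd.mono fun x hx => abs_le.2 ⟨by linarith [hx.1], hx.2⟩)
  have hzU : zc ∈ Ioo Em Ep ∩ Ioo (-tc) 0 := ⟨hzc, hzc', hzc0⟩
  have hGU : G =ᶠ[𝓝 zc] cuspPotential ρ tc c :=
    eventually_of_mem (isOpen_Ioo.mem_nhds hzc) fun z hz => by
      rw [hG, cuspPotential, logPotential_eq_integral_Iic_add_integral_Ici hρ hsupp hgap hz]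
  have hf : f₀ = fun z => c * Real.exp (stieltjesMoment ρ 1 z) := by
    subst hf₀ hm₀
    simp [stieltjesMoment, c]
  obtain ⟨hdf, hddf⟩ := deriv_const_mul_exp_stieltjesMoment_one hρ hsupp hgap hzc c
  simp only [hf, hdf, hddf] at cusp1 cusp2 cusp3
  obtain ⟨h1, h2, h3⟩ :=
    derivs_vanish_of_cusp_equations (by linarith) hzc0 (by positivity) cusp1 cusp2 cusp3
  rw [Real.log_mul hc.ne' (Real.exp_ne_zero _), Real.log_exp] at h1
  obtain ⟨e1, e2, e3, e4⟩ := iteratedDeriv_cuspPotential hρ hsupp hgap c hzU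
  have hA4 : ∫ x, ρ x / (4 * (zc - x) ^ 4) = stieltjesMoment ρ 4 zc / 4 := by
    simp_rw [mul_comm (4 : ℝ), ← div_div]
    exact integral_div _ _
  refine ⟨?_, ?_, ?_, ?_, ?_⟩
  · have hU : Ioo Em Ep ∩ Ioo (-tc) 0 ∈ 𝓝 zc := (isOpen_Ioo.inter isOpen_Ioo).mem_nhds hzU
    exact (((contDiffOn_cuspPotential hρ hsupp hgap tc c).contDiffAt hU).of_le
      (WithTop.coe_le_coe.2 le_top)).congr_of_eventuallyEq hGU
  · rw [hGU.deriv_eq, ← iteratedDeriv_one, e1]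
    linarith
  · rw [hGU.iteratedDeriv_eq, e2, h2]
  · rw [hGU.iteratedDeriv_eq, e3, h3]
  · have htc : tc ≠ 0 := by linarith
    have hzt : zc + tc ≠ 0 := by linarith
    have htz : tc + zc ≠ 0 := by linarith
    rw [hGU.iteratedDeriv_eq, e4, hA, hA4]
    field_simp
    ring

/-- Lemma 4.5 of the paper: at a cusp point `z_c` (normalized so that `x_c = 0`), the
function `G` has a triple critical point, and its fourth derivative equals `−24 t_c⁻⁴ A`. -/
theorem cusp_G_triple_critical_point
    (β : ℝ) (hβ : β ∈ Ioo (0 : ℝ) 1)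
    (ρ : ℝ → ℝ) (hmeas : Measurable ρ) (hsupp : HasCompactSupport ρ)
    (hbd : ∀ᵐ x ∂(volume : Measure ℝ), ρ x ∈ Icc (0 : ℝ) 1)
    (Em Ep : ℝ) (hE : Em < Ep)
    (hgap : ∀ᵐ x ∂(volume : Measure ℝ), x ∈ Ioo Em Ep → ρ x = 0)
    (tc zc : ℝ) (htc : 0 < tc) (hzc : zc ∈ Ioo Em Ep)
    (hzc' : -tc < zc) (hzc0 : zc < 0)
    (m₀ : ℝ → ℝ) (hm₀ : m₀ = fun z => ∫ x : ℝ, ρ x / (z - x))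
    (f₀ : ℝ → ℝ) (hf₀ : f₀ = fun z => β / (1 - β) * Real.exp (m₀ z))
    (cusp1 : zc + tc * f₀ zc / (f₀ zc + 1) = 0)
    (cusp2 : 1 + tc * deriv f₀ zc / (f₀ zc + 1) ^ 2 = 0)
    (cusp3 : deriv (deriv f₀) zc - 2 * (deriv f₀ zc) ^ 2 / (f₀ zc + 1) = 0)
    (G : ℝ → ℝ)
    (hG : G = fun z =>
      (∫ x in Iic Em, Real.log (z - x) * ρ x) +
      (∫ x in Ici Ep, Real.log (x - z) * ρ x) +
      (z + tc) * Real.log (z + tc) - z * Real.log (-z) +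
      z * Real.log (β / (1 - β)))
    (A : ℝ)
    (hA : A = tc ^ 4 * (∫ x : ℝ, ρ x / (4 * (zc - x) ^ 4)) -
      tc ^ 4 / (12 * (tc + zc) ^ 3) - tc ^ 4 / (12 * (-zc) ^ 3)) :
    ContDiffAt ℝ 4 G zc ∧
    deriv G zc = 0 ∧ iteratedDeriv 2 G zc = 0 ∧ iteratedDeriv 3 G zc = 0 ∧
    iteratedDeriv 4 G zc = -24 / tc ^ 4 * A :=
  cusp_G_triple_critical_point_general β hβ ρ hmeas hsupp hbd Em Ep hgap tc zc hzc hzc' hzc0 m₀ hm₀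
    f₀ hf₀ cusp1 cusp2 cusp3 G hG A hA
end

section
/- Let ρ : ℝ → ℝ be measurable with 0 ≤ ρ(x) ≤ 1 for almost every x and 0 < ∫_ℝ ρ < ∞, and let z ∈ ℂ with Im z > 0. Then the Stieltjes transform m(z) = ∫_ℝ ρ(x)/(z−x) dx satisfies −π < Im m(z) < 0. Consequently, for every real c > 0, the complex number f := c·exp(m(z)) satisfies Im f < 0, f + 1 ≠ 0, and Im(f/(f+1)) < 0. -/
/-!
Writing `z = a + ib`, the imaginary part of `ρ(x)/(z - x)` is `-ρ(x)·P(x)` with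
`P(x) = b/((x - a)² + b²)` the Poisson kernel of the upper half-plane, which is positive
and has total mass `π`. Hence `-Im m(z) = ∫ ρ P` lies strictly between `0 = ∫ 0·P` and
`π = ∫ 1·P`; strictness holds because neither `ρ` nor `1 - ρ` vanishes a.e. (`ρ` has positive
mass and is integrable on a space of infinite measure). Then `arg (c·exp m) = Im m ∈ (-π, 0)`,
and `Im (f/(f+1)) = Im f / |f+1|²`.
-/

open MeasureTheory

noncomputable def halfPlanePoissonKernel (z : ℂ) (x : ℝ) : ℝ :=
  z.im / ((x - z.re) ^ 2 + z.im ^ 2)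

section PoissonKernel

variable {z : ℂ}

theorem halfPlanePoissonKernel_pos (hz : 0 < z.im) (x : ℝ) :
    0 < halfPlanePoissonKernel z x := by
  unfold halfPlanePoissonKernel; positivity

theorem halfPlanePoissonKernel_eq (hz : 0 < z.im) (x : ℝ) :
    halfPlanePoissonKernel z x = z.im⁻¹ * (1 + ((x - z.re) / z.im) ^ 2)⁻¹ := by
  unfold halfPlanePoissonKernel
  field_simp
  ring

theorem integrable_halfPlanePoissonKernel (hz : 0 < z.im) :
    Integrable (halfPlanePoissonKernel z) := by
  have h := ((integrable_inv_one_add_sq.comp_div hz.ne').comp_sub_right z.re).const_mul z.im⁻¹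
  simpa only [← halfPlanePoissonKernel_eq hz] using h

theorem integral_halfPlanePoissonKernel (hz : 0 < z.im) :
    ∫ x, halfPlanePoissonKernel z x = Real.pi := by
  simp_rw [halfPlanePoissonKernel_eq hz]
  rw [integral_const_mul,
    integral_sub_right_eq_self (fun x : ℝ => (1 + (x / z.im) ^ 2)⁻¹) z.re,
    Measure.integral_comp_div (fun y : ℝ => (1 + y ^ 2)⁻¹) z.im,
    integral_univ_inv_one_add_sq, abs_of_pos hz, smul_eq_mul, inv_mul_cancel_left₀ hz.ne']

theorem im_inv_sub_ofReal (x : ℝ) : (z - x)⁻¹.im = -halfPlanePoissonKernel z x := by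
  rw [Complex.inv_im, Complex.normSq_apply, halfPlanePoissonKernel]
  simp only [Complex.sub_re, Complex.sub_im, Complex.ofReal_re, Complex.ofReal_im, sub_zero]
  ring

theorem norm_inv_sub_ofReal_le (hz : 0 < z.im) (x : ℝ) : ‖(z - x)⁻¹‖ ≤ z.im⁻¹ := by
  rw [norm_inv]
  refine inv_anti₀ hz ?_
  simpa [abs_of_pos hz] using Complex.abs_im_le_norm (z - x)

end PoissonKernel

theorem integral_mul_pos_of_nonneg_of_pos {α : Type*} [MeasurableSpace α] {μ : Measure α}
    {f g : α → ℝ} (hf : 0 ≤ᵐ[μ] f) (hf0 : ¬f =ᵐ[μ] 0) (hg : ∀ x, 0 < g x)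
    (hfg : Integrable (fun x => f x * g x) μ) : 0 < ∫ x, f x * g x ∂μ := by
  have hfg0 : 0 ≤ᵐ[μ] fun x => f x * g x := by
    filter_upwards [hf] with x hx using mul_nonneg hx (hg x).le
  rw [integral_pos_iff_support_of_nonneg_ae hfg0 hfg,
    Function.support_mul_of_ne_zero_right f fun x => (hg x).ne', pos_iff_ne_zero]
  exact mt (Measure.measure_support_eq_zero_iff μ).1 hf0

section Stieltjes

variable {ρ : ℝ → ℝ} {z : ℂ}

theorem integrable_div_sub_ofReal (hρ : Integrable ρ) (hz : 0 < z.im) :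
    Integrable fun x : ℝ => (ρ x : ℂ) / (z - x) := by
  simp_rw [div_eq_mul_inv]
  refine hρ.ofReal.mul_bdd ?_ (Filter.Eventually.of_forall (norm_inv_sub_ofReal_le hz))
  have hne : ∀ x : ℝ, z - x ≠ 0 := fun x h => hz.ne' (by simpa using congrArg Complex.im h)
  exact (Continuous.inv₀ (by fun_prop) hne).aestronglyMeasurable

theorem im_div_sub_ofReal (r x : ℝ) :
    ((r : ℂ) / (z - x)).im = -(r * halfPlanePoissonKernel z x) := by
  rw [div_eq_mul_inv, Complex.im_ofReal_mul, im_inv_sub_ofReal, mul_neg]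

theorem integrable_mul_halfPlanePoissonKernel (hρ : Integrable ρ) (hz : 0 < z.im) :
    Integrable fun x => ρ x * halfPlanePoissonKernel z x := by
  simpa [im_div_sub_ofReal] using (integrable_div_sub_ofReal hρ hz).im.neg

theorem im_integral_div_sub_ofReal (hρ : Integrable ρ) (hz : 0 < z.im) :
    (∫ x : ℝ, (ρ x : ℂ) / (z - x)).im = -∫ x, ρ x * halfPlanePoissonKernel z x := by
  rw [← RCLike.im_eq_complex_im, ← integral_im (integrable_div_sub_ofReal hρ hz),
    ← integral_neg]
  simp_rw [RCLike.im_eq_complex_im, im_div_sub_ofReal]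

end Stieltjes

theorem integral_mul_halfPlanePoissonKernel_mem_Ioo {ρ : ℝ → ℝ} {z : ℂ}
    (hbd : ∀ᵐ x, ρ x ∈ Set.Icc (0 : ℝ) 1) (hρ : Integrable ρ) (hpos : 0 < ∫ x, ρ x)
    (hz : 0 < z.im) : ∫ x, ρ x * halfPlanePoissonKernel z x ∈ Set.Ioo 0 Real.pi := by
  have hρP := integrable_mul_halfPlanePoissonKernel hρ hz
  have hP := integrable_halfPlanePoissonKernel hz
  have hρ_ne_zero : ¬ρ =ᵐ[volume] 0 := fun h => by
    simp [integral_congr_ae h] at hpos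
  have hρ_ne_one : ¬(fun x => 1 - ρ x) =ᵐ[volume] 0 := fun h => by
    have h1 : Integrable (fun _ : ℝ => (1 : ℝ)) :=
      hρ.congr (h.mono fun x hx => (sub_eq_zero.1 hx).symm)
    simp only [integrable_const_iff, one_ne_zero, false_or] at h1
    exact absurd h1.measure_univ_lt_top (by simp)
  have hcompl : 0 < ∫ x, (1 - ρ x) * halfPlanePoissonKernel z x :=
    integral_mul_pos_of_nonneg_of_pos (hbd.mono fun x hx => sub_nonneg.2 hx.2) hρ_ne_one
      (halfPlanePoissonKernel_pos hz) (by simp_rw [sub_mul, one_mul]; exact hP.sub hρP)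
  simp only [sub_mul, one_mul, integral_sub hP hρP, integral_halfPlanePoissonKernel hz] at hcompl
  exact ⟨integral_mul_pos_of_nonneg_of_pos (hbd.mono fun x hx => hx.1) hρ_ne_zero
    (halfPlanePoissonKernel_pos hz) hρP, sub_pos.1 hcompl⟩

namespace Complex

theorem im_ofReal_mul_exp_neg {c : ℝ} {w : ℂ} (hc : 0 < c) (hw₀ : -Real.pi < w.im)
    (hw₁ : w.im < 0) : ((c : ℂ) * exp w).im < 0 := by
  rw [im_ofReal_mul, exp_im]
  exact mul_neg_of_pos_of_neg hc
    (mul_neg_of_pos_of_neg (Real.exp_pos _) (Real.sin_neg_of_neg_of_neg_pi_lt hw₁ hw₀))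

theorem add_one_ne_zero_of_im_neg {f : ℂ} (hf : f.im < 0) : f + 1 ≠ 0 := fun h => by
  simpa [hf.ne] using congrArg im h

theorem im_div_add_one_neg {f : ℂ} (hf : f.im < 0) : (f / (f + 1)).im < 0 := by
  have him : (f / (f + 1)).im = f.im / normSq (f + 1) := by
    rw [div_im, add_re, add_im, one_re, one_im, add_zero, ← sub_div]
    ring
  rw [him]
  exact div_neg_of_neg_of_pos hf (normSq_pos.2 (add_one_ne_zero_of_im_neg hf))

end Complex

theorem stieltjes_transform_imaginary_part_general
    (ρ : ℝ → ℝ)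
    (hbd : ∀ᵐ x ∂(volume : Measure ℝ), ρ x ∈ Set.Icc (0 : ℝ) 1)
    (hint : Integrable ρ) (hpos : 0 < ∫ x : ℝ, ρ x)
    (z : ℂ) (hz : 0 < z.im)
    (m : ℂ) (hm : m = ∫ x : ℝ, (ρ x : ℂ) / (z - (x : ℂ)))
    (c : ℝ) (hc : 0 < c) :
    -Real.pi < m.im ∧ m.im < 0 ∧
      ((c : ℂ) * Complex.exp m).im < 0 ∧
      (c : ℂ) * Complex.exp m + 1 ≠ 0 ∧
      ((c : ℂ) * Complex.exp m / ((c : ℂ) * Complex.exp m + 1)).im < 0 := by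
  obtain ⟨hI_pos, hI_lt⟩ := integral_mul_halfPlanePoissonKernel_mem_Ioo hbd hint hpos hz
  have hm_im : m.im = -∫ x, ρ x * halfPlanePoissonKernel z x := by
    rw [hm, im_integral_div_sub_ofReal hint hz]
  have hm_gt : -Real.pi < m.im := by linarith
  have hm_lt : m.im < 0 := by linarith
  have hf := Complex.im_ofReal_mul_exp_neg hc hm_gt hm_lt
  exact ⟨hm_gt, hm_lt, hf, Complex.add_one_ne_zero_of_im_neg hf, Complex.im_div_add_one_neg hf⟩

/-- The Stieltjes transform of a density `ρ : ℝ → [0,1]` with positive finite mass,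
evaluated at a point of the upper half-plane, has imaginary part in `(−π, 0)`;
consequently `f = c·exp(m(z))` (for `c > 0`) lies in the lower half-plane, `f + 1 ≠ 0`,
and `f/(f+1)` lies in the lower half-plane. -/
theorem stieltjes_transform_imaginary_part
    (ρ : ℝ → ℝ) (hmeas : Measurable ρ)
    (hbd : ∀ᵐ x ∂(volume : Measure ℝ), ρ x ∈ Set.Icc (0 : ℝ) 1)
    (hint : Integrable ρ) (hpos : 0 < ∫ x : ℝ, ρ x)
    (z : ℂ) (hz : 0 < z.im)
    (m : ℂ) (hm : m = ∫ x : ℝ, (ρ x : ℂ) / (z - (x : ℂ)))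
    (c : ℝ) (hc : 0 < c) :
    -Real.pi < m.im ∧ m.im < 0 ∧
      ((c : ℂ) * Complex.exp m).im < 0 ∧
      (c : ℂ) * Complex.exp m + 1 ≠ 0 ∧
      ((c : ℂ) * Complex.exp m / ((c : ℂ) * Complex.exp m + 1)).im < 0 :=
  stieltjes_transform_imaginary_part_general ρ hbd hint hpos z hz m hm c hc
end

section
/- Let 𝔯 > 1 and t_c > 0 be real numbers, and let z_c, x_c ∈ ℝ with x_c − z_c = t_c/𝔯. Let f be a real-valued function that is three times differentiable on a neighborhood of z_c, and let Q be a real-valued function that is three times differentiable on a neighborhood of f(z_c). Assume: Q(f(z)) = z·(f(z)+1) for all z in a neighborhood of z_c; f(z_c) = 1/(𝔯−1); Q′(f(z_c)) = x_c − t_c; and Q″(f(z_c)) = 0. Then f′(z_c) = −𝔯²/(t_c·(𝔯−1)²), f″(z_c) = 2𝔯³/(t_c²·(𝔯−1)³), and f‴(z_c) = −𝔯⁷·Q‴(f(z_c))/(t_c⁴·(𝔯−1)⁷) − 6𝔯⁴/(t_c³·(𝔯−1)⁴). -/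
open Filter Topology

/-!
Write `a(z) = Q'(f z) - z`. The residual `Q (f z) - z (f z + 1)` vanishes near `z_c`, hence so
do its first two derivatives, and its third derivative vanishes at `z_c`:

* `a f' = f + 1`,
* `Q''(f) f'² + a f'' = 2 f'`,
* `Q'''(f) f'³ + 3 Q''(f) f' f'' + a f''' = 3 f''`.

At the cusp `a(z_c) = x_c - t_c - z_c = -t_c (𝔯 - 1) / 𝔯 ≠ 0` and `Q''(f z_c) = 0`, so these
triangular linear equations determine `f'`, `f''` and `f'''` at `z_c`.
-/

section VanishingDerivative

variable {𝕜 F : Type*} [NontriviallyNormedField 𝕜] [NormedAddCommGroup F] [NormedSpace 𝕜 F]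

theorem HasDerivAt.eq_zero_of_eventually_eq_zero {u : 𝕜 → F} {u' : F} {x : 𝕜}
    (hd : HasDerivAt u u' x) (hu : ∀ᶠ y in 𝓝 x, u y = 0) : u' = 0 :=
  hd.unique ((hasDerivAt_const x 0).congr_of_eventuallyEq hu)

theorem eventually_eq_zero_of_hasDerivAt {u u' : 𝕜 → F} {x : 𝕜}
    (hu : ∀ᶠ y in 𝓝 x, u y = 0) (hd : ∀ᶠ y in 𝓝 x, HasDerivAt u (u' y) y) :
    ∀ᶠ y in 𝓝 x, u' y = 0 := by
  filter_upwards [hu.eventually_nhds, hd] with y hy hdy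
  exact hdy.eq_zero_of_eventually_eq_zero hy

end VanishingDerivative

section Residuals

variable {f Q : ℝ → ℝ} {z : ℝ}

theorem hasDerivAt_residual₀ (hQ : DifferentiableAt ℝ Q (f z))
    (hf : DifferentiableAt ℝ f z) :
    HasDerivAt (fun z => Q (f z) - z * (f z + 1))
      ((deriv Q (f z) - z) * deriv f z - (f z + 1)) z := by
  have := (hQ.hasDerivAt.comp z hf.hasDerivAt).fun_sub
    ((hasDerivAt_id' z).fun_mul (hf.hasDerivAt.add_const 1))
  exact this.congr_deriv (by ring)

theorem hasDerivAt_residual₁ (hQ' : DifferentiableAt ℝ (deriv Q) (f z))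
    (hf : DifferentiableAt ℝ f z) (hf' : DifferentiableAt ℝ (deriv f) z) :
    HasDerivAt (fun z => (deriv Q (f z) - z) * deriv f z - (f z + 1))
      (deriv (deriv Q) (f z) * deriv f z ^ 2 + (deriv Q (f z) - z) * deriv (deriv f) z
        - 2 * deriv f z) z := by
  have := (((hQ'.hasDerivAt.comp z hf.hasDerivAt).fun_sub (hasDerivAt_id' z)).fun_mul
    hf'.hasDerivAt).fun_sub (hf.hasDerivAt.add_const 1)
  exact this.congr_deriv (by simp only [Function.comp_apply]; ring)

theorem hasDerivAt_residual₂ (hQ'' : DifferentiableAt ℝ (deriv (deriv Q)) (f z))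
    (hQ' : DifferentiableAt ℝ (deriv Q) (f z)) (hf : DifferentiableAt ℝ f z)
    (hf' : DifferentiableAt ℝ (deriv f) z) (hf'' : DifferentiableAt ℝ (deriv (deriv f)) z) :
    HasDerivAt (fun z => deriv (deriv Q) (f z) * deriv f z ^ 2
        + (deriv Q (f z) - z) * deriv (deriv f) z - 2 * deriv f z)
      (deriv (deriv (deriv Q)) (f z) * deriv f z ^ 3
        + 3 * deriv (deriv Q) (f z) * deriv f z * deriv (deriv f) z
        + (deriv Q (f z) - z) * deriv (deriv (deriv f)) z - 3 * deriv (deriv f) z) z := by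
  have := (((hQ''.hasDerivAt.comp z hf.hasDerivAt).fun_mul (hf'.hasDerivAt.pow 2)).fun_add
    (((hQ'.hasDerivAt.comp z hf.hasDerivAt).fun_sub (hasDerivAt_id' z)).fun_mul
      hf''.hasDerivAt)).fun_sub (hf'.hasDerivAt.const_mul 2)
  exact this.congr_deriv (by simp only [Function.comp_apply, Pi.pow_apply]; ring)

end Residuals

theorem cusp_derivative_values {r tc xc zc f₀ q₁ q₂ q₃ f₁ f₂ f₃ : ℝ} (hr : 1 < r)
    (htc : 0 < tc) (hxz : xc - zc = tc / r) (hf₀ : f₀ = 1 / (r - 1)) (hq₁ : q₁ = xc - tc)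
    (hq₂ : q₂ = 0)
    (e₁ : (q₁ - zc) * f₁ - (f₀ + 1) = 0)
    (e₂ : q₂ * f₁ ^ 2 + (q₁ - zc) * f₂ - 2 * f₁ = 0)
    (e₃ : q₃ * f₁ ^ 3 + 3 * q₂ * f₁ * f₂ + (q₁ - zc) * f₃ - 3 * f₂ = 0) :
    f₁ = -r ^ 2 / (tc * (r - 1) ^ 2) ∧ f₂ = 2 * r ^ 3 / (tc ^ 2 * (r - 1) ^ 3) ∧
      f₃ = -r ^ 7 * q₃ / (tc ^ 4 * (r - 1) ^ 7) - 6 * r ^ 4 / (tc ^ 3 * (r - 1) ^ 4) := by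
  have hr₀ : r ≠ 0 := by positivity
  have hr₁ : r - 1 ≠ 0 := sub_ne_zero.2 hr.ne'
  have ha : q₁ - zc = -(tc * (r - 1)) / r := by
    rw [hq₁, show xc - tc - zc = tc / r - tc by linarith]
    field_simp
    ring
  have ha₀ : q₁ - zc ≠ 0 := by
    rw [ha]
    exact div_ne_zero (neg_ne_zero.2 (mul_ne_zero htc.ne' hr₁)) hr₀
  subst hq₂
  have h₁ : f₁ = (f₀ + 1) / (q₁ - zc) := eq_div_of_mul_eq ha₀ (by linear_combination e₁)
  have h₂ : f₂ = 2 * f₁ / (q₁ - zc) := eq_div_of_mul_eq ha₀ (by linear_combination e₂)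
  have h₃ : f₃ = (3 * f₂ - q₃ * f₁ ^ 3) / (q₁ - zc) :=
    eq_div_of_mul_eq ha₀ (by linear_combination e₃)
  rw [h₃, h₂, h₁, ha, hf₀]
  refine ⟨?_, ?_, ?_⟩ <;> field_simp <;> ring

/-- Lemma 6.7 of the paper: the derivative computation for a pair of real functions
`(f, Q)` satisfying `Q(f(z)) = z(f(z)+1)` near the base point `z_c` of the characteristic
through a cusp `(x_c, t_c)` with tangent slope `𝔯`. -/
theorem complex_slope_derivatives_at_cusp
    (r tc xc zc : ℝ) (hr : 1 < r) (htc : 0 < tc)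
    (hxz : xc - zc = tc / r)
    (f Q : ℝ → ℝ)
    (hf : ∀ᶠ z in nhds zc, DifferentiableAt ℝ f z ∧ DifferentiableAt ℝ (deriv f) z ∧
      DifferentiableAt ℝ (deriv (deriv f)) z)
    (hQ : ∀ᶠ w in nhds (f zc), DifferentiableAt ℝ Q w ∧ DifferentiableAt ℝ (deriv Q) w ∧
      DifferentiableAt ℝ (deriv (deriv Q)) w)
    (heq : ∀ᶠ z in nhds zc, Q (f z) = z * (f z + 1))
    (hfzc : f zc = 1 / (r - 1))
    (hQ1 : deriv Q (f zc) = xc - tc)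
    (hQ2 : deriv (deriv Q) (f zc) = 0) :
    deriv f zc = -r ^ 2 / (tc * (r - 1) ^ 2) ∧
    deriv (deriv f) zc = 2 * r ^ 3 / (tc ^ 2 * (r - 1) ^ 3) ∧
    deriv (deriv (deriv f)) zc =
      -r ^ 7 * deriv (deriv (deriv Q)) (f zc) / (tc ^ 4 * (r - 1) ^ 7) -
        6 * r ^ 4 / (tc ^ 3 * (r - 1) ^ 4) := by
  have hdiff := hf.and (hf.self_of_nhds.1.continuousAt.eventually hQ)
  have e₀ : ∀ᶠ z in 𝓝 zc, Q (f z) - z * (f z + 1) = 0 :=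
    heq.mono fun z hz => sub_eq_zero.2 hz
  have e₁ := eventually_eq_zero_of_hasDerivAt e₀
    (hdiff.mono fun z hz => hasDerivAt_residual₀ hz.2.1 hz.1.1)
  have e₂ := eventually_eq_zero_of_hasDerivAt e₁
    (hdiff.mono fun z hz => hasDerivAt_residual₁ hz.2.2.1 hz.1.1 hz.1.2.1)
  obtain ⟨⟨hf₁, hf₂, hf₃⟩, hQ₁, hQ₂, hQ₃⟩ := hdiff.self_of_nhds
  have e₃ := (hasDerivAt_residual₂ hQ₃ hQ₂ hf₁ hf₂ hf₃).eq_zero_of_eventually_eq_zero e₂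
  exact cusp_derivative_values hr htc hxz hfzc hQ1 hQ2 e₁.self_of_nhds e₂.self_of_nhds
    e₃
end

section
/- For every φ ∈ (0, 1/2) and C₀ ≥ 1 there is a constant C = C(φ, C₀) with the following property. Let n ≥ 2 be an integer, β ∈ (φ, 1−φ), let M, N be integers with 1 ≤ M, N ≤ C₀·n, let d_{−M} < d_{−M+1} < ⋯ < d_N be integers with |d_i| ≤ C₀·n for all i, and let x₂, t₂ be integers with |x₂| ≤ C₀·n and 1 ≤ t₂ ≤ C₀·n. Then for every z in the open upper half-plane: the limit D₂′(z) := ∑_{i=−M}^{N} 1/(nz − d_i) − lim_{m→∞} ( ∑_{i=−m}^{−x₂} 1/(nz + i) + ∑_{i=−x₂+t₂}^{m} 1/(nz + i) ) + log(β/(1−β)) exists, and for any x_* ∈ E minimizing |z − x_*| over E one has |D₂′(z) − s/(n(z − x_*))| ≤ C·log n, where s = 1 if n·x_* ∈ {d_{−M}, …, d_N} and s = −1 otherwise. -/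
/-!
Put `w = n z` and `f k = (w - k)⁻¹`. Reflecting `i ↦ -i`, the subtracted sums are the symmetric
sums `∑_{|k| ≤ m} f k` minus the sum over the gap `G = {x₂ - t₂ + 1, …, x₂ - 1}`; so with
`D = {d_i}` and `S = lim ∑_{|k| ≤ m} f k` (which is `π cot (π w)`), the limit is
`∑_D f + ∑_G f - S + log (β / (1 - β))`, and `n E = {k | k ∈ D ↔ k ∈ G}`, the sign being `+1`
on `D ∩ G` and `-1` off `D ∪ G`.

Let `k₀` be the integer nearest to `Re w`. Centering the symmetric sums at `k₀` pairs the terms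
into `(v - j)⁻¹ + (v + j)⁻¹ = 2 v / (v² - j²)` with `v = w - k₀`, `|Re v| ≤ 1/2`; these are
`O(a / (a + j)²)` with `a = |Im v| + 1/2`, so `S - f k₀` is bounded by an absolute constant.
Every other term of the finite sums satisfies `‖f k‖ ≤ 2 / |k - k₀|`, and the sums of these are
harmonic sums of length `O(n)`. The coefficient of `f k₀` left over is `±1` exactly when
`k₀ ∈ n E`: it cancels against `s f k_*` when `k₀ = k_*`, and otherwise
`‖f k₀‖ ≤ ‖f k_*‖ ≤ 2` by minimality of `k_*`.
-/

open Filter Finset Topology Real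

lemma harmonic_mono : Monotone harmonic :=
  monotone_nat_of_le_succ fun n => by
    rw [harmonic_succ]; simp only [le_add_iff_nonneg_right]; positivity

lemma sum_inv_le_harmonic_card (s : Finset ℕ) (hs : 0 ∉ s) :
    ∑ m ∈ s, (m : ℝ)⁻¹ ≤ harmonic s.card := by
  induction s using Finset.induction_on_max with
  | empty => simp
  | insert a s ha ih =>
    have ha' : a ∉ s := fun h => lt_irrefl a (ha a h)
    have hsub : s ⊆ Ico 1 a := fun x hx => mem_Ico.2
      ⟨Nat.one_le_iff_ne_zero.2 fun h => hs (h ▸ mem_insert_of_mem hx), ha x hx⟩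
    have hcard : s.card + 1 ≤ a := by
      have := card_le_card hsub
      simp only [Nat.card_Ico] at this
      have : a ≠ 0 := fun h => hs (h ▸ mem_insert_self a s)
      omega
    have hlast : (a : ℝ)⁻¹ ≤ ((s.card + 1 : ℕ) : ℝ)⁻¹ :=
      inv_anti₀ (by positivity) (by exact_mod_cast hcard)
    rw [sum_insert ha', card_insert_of_notMem ha', harmonic_succ]
    push_cast at hlast ⊢
    linarith [ih fun h => hs (mem_insert_of_mem h)]

lemma sum_inv_abs_sub_le_harmonic (T : Finset ℤ) (c : ℤ) (hc : c ∉ T)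
    (hinj : Set.InjOn (fun k => (k - c).natAbs) T) :
    ∑ k ∈ T, |(k : ℝ) - c|⁻¹ ≤ harmonic T.card := by
  have habs : ∀ k : ℤ, |(k : ℝ) - c| = ((k - c).natAbs : ℝ) := fun k => by
    rw [Nat.cast_natAbs]; push_cast; rfl
  simp_rw [habs]
  rw [← sum_image (f := fun m : ℕ => (m : ℝ)⁻¹) hinj, ← card_image_of_injOn hinj]
  refine sum_inv_le_harmonic_card _ fun h => ?_
  obtain ⟨k, hk, hk0⟩ := mem_image.1 h
  exact hc ((by omega : k = c) ▸ hk)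

lemma sum_erase_inv_abs_sub_le (S : Finset ℤ) (c : ℤ) :
    ∑ k ∈ S.erase c, |(k : ℝ) - c|⁻¹ ≤ 2 * harmonic S.card := by
  rw [← sum_filter_add_sum_filter_not _ (c < ·)]
  have hmono : ∀ p : ℤ → Prop, [DecidablePred p] →
      (harmonic ((S.erase c).filter p).card : ℝ) ≤ harmonic S.card := fun _ _ =>
    mod_cast harmonic_mono ((card_filter_le _ _).trans card_erase_le)
  have hpos := sum_inv_abs_sub_le_harmonic ((S.erase c).filter (c < ·)) c (by simp)
    fun k hk l hl h => by simp only [coe_filter, mem_erase, Set.mem_ofPred_eq] at hk hl h; omega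
  have hneg := sum_inv_abs_sub_le_harmonic ((S.erase c).filter (¬ c < ·)) c (by simp)
    fun k hk l hl h => by simp only [coe_filter, mem_erase, Set.mem_ofPred_eq] at hk hl h; omega
  linarith [hmono (c < ·), hmono (¬ c < ·)]

lemma harmonic_le_one_add_log_mul {k n : ℕ} {K : ℝ} (hK : 1 ≤ K) (hn : 1 ≤ n)
    (hk : (k : ℝ) ≤ K * n) : (harmonic k : ℝ) ≤ 1 + log K + log n := by
  have hKn : 1 ≤ K * n := one_le_mul_of_one_le_of_one_le hK (mod_cast hn)
  rw [add_assoc, ← log_mul (by positivity) (by positivity)]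
  refine (harmonic_le_one_add_log k).trans ?_
  rcases k.eq_zero_or_pos with rfl | hk0
  · simp [log_nonneg hKn]
  · gcongr

lemma abs_im_add_abs_le_two_mul_norm_add (v : ℂ) (hv : |v.re| ≤ 1 / 2) (x : ℝ) :
    |v.im| + |x| ≤ 2 * ‖v + x‖ + 1 / 2 := by
  have him : |v.im| ≤ ‖v + x‖ := by simpa using Complex.abs_im_le_norm (v + x)
  have hre : |v.re + x| ≤ ‖v + x‖ := by simpa using Complex.abs_re_le_norm (v + x)
  have : |x| ≤ |v.re + x| + |v.re| := by
    simpa using abs_add_le (v.re + x) (-v.re)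
  linarith

lemma norm_inv_sub_add_inv_add_le (v : ℂ) (hv : |v.re| ≤ 1 / 2) (j : ℕ) :
    ‖(v - (j + 1))⁻¹ + (v + (j + 1))⁻¹‖ ≤ 8 * (|v.im| + 1 / 2) / (|v.im| + 1 / 2 + j) ^ 2 := by
  have hj : |((j : ℝ) + 1)| = j + 1 := abs_of_pos (by positivity)
  have hminus : (|v.im| + 1 / 2 + j) / 2 ≤ ‖v - (j + 1)‖ := by
    have := abs_im_add_abs_le_two_mul_norm_add v hv (-((j : ℝ) + 1))
    rw [abs_neg, hj] at this
    push_cast at this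
    rw [← sub_eq_add_neg] at this
    linarith
  have hplus : (|v.im| + 1 / 2 + j) / 2 ≤ ‖v + (j + 1)‖ := by
    have := abs_im_add_abs_le_two_mul_norm_add v hv ((j : ℝ) + 1)
    rw [hj] at this
    push_cast at this
    linarith
  have hnum : ‖2 * v‖ ≤ 2 * (|v.im| + 1 / 2) := by
    rw [norm_mul, Complex.norm_two]
    linarith [Complex.norm_le_abs_re_add_abs_im v]
  have hne : ∀ u : ℂ, (|v.im| + 1 / 2 + j) / 2 ≤ ‖u‖ → u ≠ 0 := fun u hu h => by
    rw [h, norm_zero] at hu; linarith [abs_nonneg v.im, (Nat.cast_nonneg j : (0 : ℝ) ≤ j)]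
  rw [inv_add_inv (hne _ hminus) (hne _ hplus), norm_div, norm_mul]
  calc ‖v - (j + 1) + (v + (j + 1))‖ / (‖v - (j + 1)‖ * ‖v + (j + 1)‖)
      = ‖2 * v‖ / (‖v - (j + 1)‖ * ‖v + (j + 1)‖) := by ring_nf
    _ ≤ 2 * (|v.im| + 1 / 2) / ((|v.im| + 1 / 2 + j) / 2 * ((|v.im| + 1 / 2 + j) / 2)) :=
        div_le_div₀ (by positivity) hnum (by positivity)
          (mul_le_mul hminus hplus (by positivity) (norm_nonneg _))
    _ = 8 * (|v.im| + 1 / 2) / (|v.im| + 1 / 2 + j) ^ 2 := by field_simp; ring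

lemma sum_range_succ_inv_add_sq_le (a : ℝ) (ha : 0 < a) (m : ℕ) :
    ∑ j ∈ range (m + 1), ((a + j) ^ 2)⁻¹ ≤ (a ^ 2)⁻¹ + a⁻¹ - (a + m)⁻¹ := by
  induction m with
  | zero => simp
  | succ m ih =>
    have hstep : ((a + (m + 1)) ^ 2)⁻¹ ≤ (a + m)⁻¹ - (a + (m + 1))⁻¹ := by
      rw [inv_sub_inv (by positivity) (by positivity), ← one_div,
        div_le_div_iff₀ (by positivity) (by positivity)]
      nlinarith
    rw [sum_range_succ]
    push_cast at ih hstep ⊢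
    linarith

lemma sum_range_norm_inv_sub_add_inv_add_le (v : ℂ) (hv : |v.re| ≤ 1 / 2) (m : ℕ) :
    ∑ j ∈ range m, ‖(v - (j + 1))⁻¹ + (v + (j + 1))⁻¹‖ ≤ 24 := by
  obtain ⟨a, ha_def⟩ : ∃ a, a = |v.im| + 1 / 2 := ⟨_, rfl⟩
  have ha : 1 / 2 ≤ a := by rw [ha_def]; linarith [abs_nonneg v.im]
  calc ∑ j ∈ range m, ‖(v - (j + 1))⁻¹ + (v + (j + 1))⁻¹‖
      ≤ ∑ j ∈ range (m + 1), 8 * a * ((a + j) ^ 2)⁻¹ := by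
        refine (sum_le_sum fun j _ => ?_).trans (sum_le_sum_of_subset_of_nonneg
          (range_subset_range.2 m.le_succ) fun _ _ _ => by positivity)
        rw [ha_def, ← div_eq_mul_inv]
        exact norm_inv_sub_add_inv_add_le v hv j
    _ ≤ 8 * a * ((a ^ 2)⁻¹ + a⁻¹ - (a + m)⁻¹) := by
        rw [← mul_sum]; gcongr; exact sum_range_succ_inv_add_sq_le a (by linarith) m
    _ ≤ 24 := by
        have : 0 ≤ (a + m)⁻¹ := by positivity
        have : 8 * a * ((a ^ 2)⁻¹ + a⁻¹) = 8 * a⁻¹ + 8 := by field_simp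
        have : a⁻¹ ≤ 2 := by rw [inv_le_comm₀ (by linarith) (by norm_num)]; linarith
        nlinarith

section SymmetricSums

variable {M : Type*} [AddCommGroup M]

lemma sum_Icc_sub_add_eq (g : ℤ → M) (c : ℤ) (m : ℕ) :
    ∑ k ∈ Icc (c - m) (c + m), g k = g c + ∑ j ∈ range m, (g (c + (j + 1)) + g (c - (j + 1))) := by
  induction m with
  | zero => simp
  | succ m ih =>
    have hwin : Icc (c - (m + 1 : ℕ)) (c + (m + 1 : ℕ))
        = insert (c + (m + 1)) (insert (c - (m + 1)) (Icc (c - m) (c + m))) := by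
      ext k; simp only [mem_Icc, mem_insert]; omega
    rw [hwin, sum_insert (by simp only [mem_insert, mem_Icc]; omega),
      sum_insert (by simp only [mem_Icc]; omega), ih, sum_range_succ]
    abel

lemma sum_Icc_add_one_add (g : ℤ → M) {a b : ℤ} (h : a ≤ b + 1) :
    ∑ k ∈ Icc (a + 1) (b + 1), g k + g a = ∑ k ∈ Icc a b, g k + g (b + 1) := by
  have hl : insert a (Icc (a + 1) (b + 1)) = Icc a (b + 1) := by
    ext k; simp only [mem_Icc, mem_insert]; omega
  have hr : insert (b + 1) (Icc a b) = Icc a (b + 1) := by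
    ext k; simp only [mem_Icc, mem_insert]; omega
  rw [add_comm, ← sum_insert (s := Icc (a + 1) (b + 1)) (by simp), hl, ← hr, sum_insert (by simp),
    add_comm]

variable [TopologicalSpace M] [IsTopologicalAddGroup M]

lemma tendsto_sum_Icc_shift_sub {g : ℤ → M} (hg : Tendsto g cofinite (𝓝 0)) (c : ℤ) :
    Tendsto (fun m : ℕ => ∑ k ∈ Icc (c - m) (c + m), g k - ∑ k ∈ Icc (-(m : ℤ)) m, g k)
      atTop (𝓝 0) := by
  have hinj : ∀ f : ℕ → ℤ, f.Injective → Tendsto (g ∘ f) atTop (𝓝 0) := fun f hf =>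
    Nat.cofinite_eq_atTop ▸ hg.comp hf.tendsto_cofinite
  have hshift : ∀ a : ℤ, Tendsto (fun m : ℕ => g (a + m)) atTop (𝓝 0) ∧
      Tendsto (fun m : ℕ => g (a - m)) atTop (𝓝 0) := fun a =>
    ⟨hinj _ ((add_right_injective a).comp Nat.cast_injective),
     hinj _ (sub_right_injective.comp Nat.cast_injective)⟩
  have hstep : ∀ c : ℤ, Tendsto (fun m : ℕ => ∑ k ∈ Icc (c + 1 - m) (c + 1 + m), g k
      - ∑ k ∈ Icc (c - m) (c + m), g k) atTop (𝓝 0) := fun c => by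
    have := ((hshift (c + 1)).1.sub (hshift c).2)
    rw [sub_zero] at this
    refine this.congr fun m => ?_
    have := sum_Icc_add_one_add g (a := c - m) (b := c + m) (by omega)
    rw [show c - m + 1 = c + 1 - m by ring, show c + m + 1 = c + 1 + m by ring] at this
    rw [sub_eq_sub_iff_add_eq_add, this, add_comm]
  induction c with
  | zero => simpa using tendsto_const_nhds
  | succ c ih => simpa using ih.add (hstep c)
  | pred c ih => simpa using ih.sub (hstep (-c - 1))

end SymmetricSums

lemma tendsto_inv_sub_intCast_cofinite (w : ℂ) :
    Tendsto (fun k : ℤ => (w - k)⁻¹) cofinite (𝓝 0) := by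
  have hnorm : Tendsto (fun k : ℤ => ‖(k : ℂ)‖) cofinite atTop := by
    refine (tendsto_norm_cocompact_atTop.comp Int.tendsto_coe_cofinite).congr fun k => ?_
    simp
  exact tendsto_inv₀_cobounded.comp
    ((tendsto_const_sub_cobounded w).comp (tendsto_norm_atTop_iff_cobounded.mp hnorm))

theorem exists_tendsto_sum_Icc_inv_sub (w : ℂ) :
    ∃ S, Tendsto (fun m : ℕ => ∑ k ∈ Icc (-(m : ℤ)) m, (w - k)⁻¹) atTop (𝓝 S) ∧
      ‖S - (w - round w.re)⁻¹‖ ≤ 24 := by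
  set k₀ := round w.re
  set v := w - k₀
  have hv : |v.re| ≤ 1 / 2 := by simpa [v] using abs_sub_round w.re
  set p : ℕ → ℂ := fun j => (v - (j + 1))⁻¹ + (v + (j + 1))⁻¹
  have hp : Summable fun j => ‖p j‖ :=
    summable_of_sum_range_le (fun _ => norm_nonneg _) (sum_range_norm_inv_sub_add_inv_add_le v hv)
  refine ⟨(w - k₀)⁻¹ + ∑' j, p j, ?_, ?_⟩
  · have hcentered : Tendsto (fun m : ℕ => ∑ k ∈ Icc (k₀ - m) (k₀ + m), (w - k)⁻¹) atTop
        (𝓝 ((w - k₀)⁻¹ + ∑' j, p j)) := by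
      refine (tendsto_const_nhds.add (hp.of_norm.hasSum.tendsto_sum_nat)).congr fun m => ?_
      rw [sum_Icc_sub_add_eq]
      congr 1
      refine sum_congr rfl fun j _ => ?_
      simp only [p, v]; push_cast; ring_nf
    simpa using hcentered.sub (tendsto_sum_Icc_shift_sub (tendsto_inv_sub_intCast_cofinite w) k₀)
  · rw [add_sub_cancel_left]
    exact (norm_tsum_le_tsum_norm hp).trans
      (Real.tsum_le_of_sum_range_le (fun _ => norm_nonneg _) (sum_range_norm_inv_sub_add_inv_add_le v hv))

lemma one_le_abs_intCast_sub {k k₀ : ℤ} (hk : k ≠ k₀) : (1 : ℝ) ≤ |(k : ℝ) - k₀| := by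
  rw [← Int.cast_sub, ← Int.cast_abs]; exact_mod_cast Int.one_le_abs (sub_ne_zero.2 hk)

section PoleEstimate

variable {w : ℂ} {k₀ : ℤ}

lemma abs_sub_le_two_mul_norm_sub (hw : |w.re - k₀| ≤ 1 / 2) {k : ℤ} (hk : k ≠ k₀) :
    |(k : ℝ) - k₀| ≤ 2 * ‖w - k‖ := by
  have hre : |w.re - k| ≤ ‖w - k‖ := by simpa using Complex.abs_re_le_norm (w - k)
  have htri : |(k : ℝ) - k₀| ≤ |w.re - k| + |w.re - k₀| := by
    simpa [abs_sub_comm (k : ℝ)] using abs_sub_le (k : ℝ) w.re k₀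
  linarith [one_le_abs_intCast_sub hk]

lemma norm_inv_sub_le (hw : |w.re - k₀| ≤ 1 / 2) {k : ℤ} (hk : k ≠ k₀) :
    ‖(w - k)⁻¹‖ ≤ 2 * |(k : ℝ) - k₀|⁻¹ := by
  have hpos : 0 < |(k : ℝ) - k₀| := by linarith [one_le_abs_intCast_sub hk]
  calc ‖(w - k)⁻¹‖ = ‖w - k‖⁻¹ := norm_inv _
    _ ≤ (|(k : ℝ) - k₀| / 2)⁻¹ :=
        inv_anti₀ (by positivity) (by linarith [abs_sub_le_two_mul_norm_sub hw hk])
    _ = 2 * |(k : ℝ) - k₀|⁻¹ := by rw [inv_div, div_eq_mul_inv]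

lemma sum_erase_norm_inv_sub_le (hw : |w.re - k₀| ≤ 1 / 2) (S : Finset ℤ) :
    ∑ k ∈ S.erase k₀, ‖(w - k)⁻¹‖ ≤ 4 * harmonic S.card := by
  calc ∑ k ∈ S.erase k₀, ‖(w - k)⁻¹‖ ≤ ∑ k ∈ S.erase k₀, 2 * |(k : ℝ) - k₀|⁻¹ :=
        sum_le_sum fun k hk => norm_inv_sub_le hw (ne_of_mem_erase hk)
    _ ≤ 4 * harmonic S.card := by
        rw [← mul_sum]; linarith [sum_erase_inv_abs_sub_le S k₀]

lemma sum_eq_sum_erase_add_ite {ι M : Type*} [DecidableEq ι] [AddCommMonoid M] (S : Finset ι)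
    (f : ι → M) (a : ι) : ∑ k ∈ S, f k = ∑ k ∈ S.erase a, f k + if a ∈ S then f a else 0 := by
  split_ifs with h
  · exact (sum_erase_add _ _ h).symm
  · rw [erase_eq_of_notMem h, add_zero]

variable (D G : Finset ℤ) {ks : ℤ}

lemma norm_pole_defect_le (hw : |w.re - k₀| ≤ 1 / 2)
    (hmin : ∀ k : ℤ, (k ∈ D ↔ k ∈ G) → ‖w - ks‖ ≤ ‖w - k‖) (hks : ks ∈ D ↔ ks ∈ G) :
    ‖(if k₀ ∈ D then (w - k₀)⁻¹ else 0) + (if k₀ ∈ G then (w - k₀)⁻¹ else 0) - (w - k₀)⁻¹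
      - (if ks ∈ D then 1 else -1) * (w - ks)⁻¹‖ ≤ 4 := by
  by_cases hk : ks = k₀
  · subst hk
    by_cases hD : ks ∈ D <;> by_cases hG : ks ∈ G <;> simp_all
  have hone := one_le_abs_intCast_sub hk
  have hpos : 0 < ‖w - ks‖ := by linarith [abs_sub_le_two_mul_norm_sub hw hk]
  have hks_le : ‖(w - ks)⁻¹‖ ≤ 2 := by
    linarith [norm_inv_sub_le hw hk, inv_le_one_of_one_le₀ hone]
  have hk₀ : ‖(if k₀ ∈ D then (w - k₀)⁻¹ else 0) + (if k₀ ∈ G then (w - k₀)⁻¹ else 0)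
      - (w - k₀)⁻¹‖ ≤ ‖(w - ks)⁻¹‖ := by
    by_cases hD : k₀ ∈ D <;> by_cases hG : k₀ ∈ G <;> simp [hD, hG]
    all_goals exact inv_anti₀ hpos (hmin k₀ (by simp [hD, hG]))
  have hsign : ‖(if ks ∈ D then (1 : ℂ) else -1) * (w - ks)⁻¹‖ = ‖(w - ks)⁻¹‖ := by
    split_ifs <;> simp
  calc _ ≤ _ := norm_sub_le _ _
    _ ≤ 4 := by linarith

theorem norm_sum_add_sum_sub_pole_le (hw : |w.re - k₀| ≤ 1 / 2)
    (hmin : ∀ k : ℤ, (k ∈ D ↔ k ∈ G) → ‖w - ks‖ ≤ ‖w - k‖) (hks : ks ∈ D ↔ ks ∈ G) :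
    ‖∑ k ∈ D, (w - k)⁻¹ + ∑ k ∈ G, (w - k)⁻¹ - (w - k₀)⁻¹
      - (if ks ∈ D then 1 else -1) * (w - ks)⁻¹‖ ≤ 4 * harmonic D.card + 4 * harmonic G.card + 4 := by
  rw [sum_eq_sum_erase_add_ite D _ k₀, sum_eq_sum_erase_add_ite G _ k₀]
  calc _ = ‖∑ k ∈ D.erase k₀, (w - k)⁻¹ + ∑ k ∈ G.erase k₀, (w - k)⁻¹
          + ((if k₀ ∈ D then (w - k₀)⁻¹ else 0) + (if k₀ ∈ G then (w - k₀)⁻¹ else 0)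
            - (w - k₀)⁻¹ - (if ks ∈ D then 1 else -1) * (w - ks)⁻¹)‖ := by congr 1; abel
    _ ≤ ∑ k ∈ D.erase k₀, ‖(w - k)⁻¹‖ + ∑ k ∈ G.erase k₀, ‖(w - k)⁻¹‖ + 4 :=
        (norm_add₃_le ..).trans (add_le_add_three (norm_sum_le _ _) (norm_sum_le _ _)
          (norm_pole_defect_le D G hw hmin hks))
    _ ≤ _ := by
        linarith [sum_erase_norm_inv_sub_le hw D, sum_erase_norm_inv_sub_le hw G]

theorem norm_sum_sub_limit_add_sub_pole_le {S : ℂ} (c : ℂ) (hw : |w.re - k₀| ≤ 1 / 2)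
    (hS : ‖S - (w - k₀)⁻¹‖ ≤ 24) (hmin : ∀ k : ℤ, (k ∈ D ↔ k ∈ G) → ‖w - ks‖ ≤ ‖w - k‖)
    (hks : ks ∈ D ↔ ks ∈ G) :
    ‖∑ k ∈ D, (w - k)⁻¹ - (S - ∑ k ∈ G, (w - k)⁻¹) + c - (if ks ∈ D then 1 else -1) * (w - ks)⁻¹‖
      ≤ 4 * harmonic D.card + 4 * harmonic G.card + 28 + ‖c‖ := by
  calc _ = ‖(∑ k ∈ D, (w - k)⁻¹ + ∑ k ∈ G, (w - k)⁻¹ - (w - k₀)⁻¹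
          - (if ks ∈ D then 1 else -1) * (w - ks)⁻¹) - (S - (w - k₀)⁻¹) + c‖ := by ring_nf
    _ ≤ _ := (norm_add_le _ _).trans (add_le_add ((norm_sub_le _ _).trans
          (add_le_add (norm_sum_add_sum_sub_pole_le D G hw hmin hks) hS)) le_rfl)
    _ = _ := by ring

end PoleEstimate

lemma sum_Icc_one_div_add_eq (w : ℂ) (p q : ℤ) :
    ∑ i ∈ Icc p q, 1 / (w + i) = ∑ k ∈ Icc (-q) (-p), (w - k)⁻¹ := by
  refine sum_nbij' (fun i => -i) (fun k => -k) ?_ ?_ ?_ ?_ ?_ <;> intro i hi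
  all_goals simp_all [one_div]
  all_goals omega

lemma sum_Icc_one_div_add_add_sum_Icc_one_div_add (w : ℂ) {x t m : ℤ} (ht : 1 ≤ t)
    (hx : x ≤ m) (hxt : -m ≤ x - t) :
    ∑ i ∈ Icc (-m) (-x), 1 / (w + i) + ∑ i ∈ Icc (-x + t) m, 1 / (w + i)
      = ∑ k ∈ Icc (-m) m, (w - k)⁻¹ - ∑ k ∈ Icc (x - t + 1) (x - 1), (w - k)⁻¹ := by
  have hunion : Icc (-m) m = Icc x m ∪ (Icc (-m) (x - t) ∪ Icc (x - t + 1) (x - 1)) := by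
    ext k; simp only [mem_Icc, mem_union]; omega
  rw [sum_Icc_one_div_add_eq, sum_Icc_one_div_add_eq, neg_neg, neg_neg, neg_add, neg_neg,
    ← sub_eq_add_neg, hunion, sum_union, sum_union, eq_sub_iff_add_eq, add_assoc]
  · rw [disjoint_left]; intro k; simp only [mem_Icc]; omega
  · rw [disjoint_left]; intro k; simp only [mem_Icc, mem_union]; omega

lemma tendsto_sum_Icc_one_div_add_add {w S : ℂ} {x t : ℤ} (ht : 1 ≤ t)
    (hS : Tendsto (fun m : ℕ => ∑ k ∈ Icc (-(m : ℤ)) m, (w - k)⁻¹) atTop (𝓝 S)) :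
    Tendsto (fun m : ℕ => ∑ i ∈ Icc (-(m : ℤ)) (-x), 1 / (w + i)
        + ∑ i ∈ Icc (-x + t) (m : ℤ), 1 / (w + i))
      atTop (𝓝 (S - ∑ k ∈ Icc (x - t + 1) (x - 1), (w - k)⁻¹)) := by
  refine (hS.sub_const _).congr' ?_
  filter_upwards [eventually_ge_atTop (x.natAbs + t.natAbs)] with m hm
  rw [sum_Icc_one_div_add_add_sum_Icc_one_div_add w ht (by omega) (by omega)]

lemma mem_gap_pole_iff (p : Prop) (a b k : ℤ) :
    ((p ∧ a + 1 ≤ k ∧ k ≤ b - 1) ∨ ((k ≤ a ∨ b ≤ k) ∧ ¬p)) ↔ (p ↔ k ∈ Icc (a + 1) (b - 1)) := by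
  rw [mem_Icc]
  by_cases hp : p
  · simp [hp]
  · simp only [hp, false_and, false_or, not_false_eq_true, and_true, false_iff]
    omega

lemma le_mul_log_of_le_add_mul_log {x A B : ℝ} {n : ℕ} (hn : 2 ≤ n) (hA : 0 ≤ A)
    (h : x ≤ A + B * log n) : x ≤ (A / log 2 + B) * log n := by
  have hlog2 : 0 < log 2 := log_pos one_lt_two
  have hA' : A ≤ A / log 2 * log n := by
    rw [div_mul_eq_mul_div, le_div_iff₀ hlog2]
    exact mul_le_mul_of_nonneg_left (log_le_log two_pos (mod_cast hn)) hA
  linarith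

lemma abs_log_div_one_sub_le {φ β : ℝ} (hφ : 0 < φ) (hβ : β ∈ Set.Ioo φ (1 - φ)) :
    |log (β / (1 - β))| ≤ log ((1 - φ) / φ) := by
  obtain ⟨hφβ, hβφ⟩ := hβ
  have hlower : log (φ / (1 - φ)) ≤ log (β / (1 - β)) :=
    log_le_log (div_pos hφ (by linarith)) (div_le_div₀ (by linarith) hφβ.le (by linarith) (by linarith))
  have hupper : log (β / (1 - β)) ≤ log ((1 - φ) / φ) :=
    log_le_log (div_pos (by linarith) (by linarith)) (div_le_div₀ (by linarith) hβφ.le hφ (by linarith))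
  rw [← inv_div, log_inv] at hlower
  exact abs_le.2 ⟨by linarith, hupper⟩

lemma natCast_card_Icc {a b : ℤ} (h : a ≤ b + 1) : ((Icc a b).card : ℝ) = b + 1 - a := by
  exact_mod_cast Int.card_Icc_of_le a b h

lemma natCast_card_image_Icc_le (f : ℤ → ℤ) {a b : ℤ} (h : a ≤ b + 1) :
    (((Icc a b).image f).card : ℝ) ≤ b + 1 - a :=
  (Nat.cast_le.2 card_image_le).trans_eq (natCast_card_Icc h)

lemma mul_sub_intCast_div (n : ℕ) (hn : n ≠ 0) (z : ℂ) (k : ℤ) :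
    (n : ℂ) * (z - ((k / n : ℝ) : ℂ)) = n * z - k := by
  push_cast; field_simp

lemma norm_mul_sub_intCast_le {n : ℕ} (hn : n ≠ 0) {z : ℂ} {k l : ℤ}
    (h : ‖z - ((k / n : ℝ) : ℂ)‖ ≤ ‖z - ((l / n : ℝ) : ℂ)‖) : ‖n * z - k‖ ≤ ‖n * z - l‖ := by
  rw [← mul_sub_intCast_div n hn, ← mul_sub_intCast_div n hn, norm_mul, norm_mul]
  gcongr

/-- Lemma 4.12 of the paper: away from its nearest pole, the logarithmic derivative `D₂′`
of the key function `D₂` arising in the steepest-descent analysis of the NBRW kernel is of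
size `O(log n)`.  The limit defining `D₂′(z)` exists, and near the nearest pole `x_*` of
the pole set `E`, one has `|D₂′(z) − s/(n(z − x_*))| ≤ C log n` with the appropriate
sign `s ∈ {1, −1}`. -/
theorem D2_derivative_log_bound
    (φ C₀ : ℝ) (hφ : φ ∈ Set.Ioo (0 : ℝ) (1 / 2)) (hC₀ : 1 ≤ C₀) :
    ∃ C : ℝ, 0 < C ∧
      ∀ (n : ℕ), 2 ≤ n →
      ∀ (β : ℝ), β ∈ Set.Ioo φ (1 - φ) →
      ∀ (M N : ℤ), 1 ≤ M → 1 ≤ N → (M : ℝ) ≤ C₀ * n → (N : ℝ) ≤ C₀ * n →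
      ∀ (d : ℤ → ℤ), StrictMonoOn d (Set.Icc (-M) N) →
        (∀ i ∈ Set.Icc (-M) N, |(d i : ℝ)| ≤ C₀ * n) →
      ∀ (x₂ t₂ : ℤ), |(x₂ : ℝ)| ≤ C₀ * n → 1 ≤ t₂ → (t₂ : ℝ) ≤ C₀ * n →
      ∀ z : ℂ, 0 < z.im →
        ∃ L : ℂ,
          Tendsto (fun m : ℕ =>
              (∑ i ∈ Finset.Icc (-M) N, 1 / ((n : ℂ) * z - (d i : ℂ)))
              - ((∑ i ∈ Finset.Icc (-(m : ℤ)) (-x₂), 1 / ((n : ℂ) * z + (i : ℂ)))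
                + (∑ i ∈ Finset.Icc (-x₂ + t₂) (m : ℤ), 1 / ((n : ℂ) * z + (i : ℂ))))
              + ((Real.log (β / (1 - β)) : ℝ) : ℂ)) atTop (nhds L) ∧
          ∀ xs : ℝ,
            (∃ k : ℤ, xs = (k : ℝ) / n ∧
              (((∃ i ∈ Finset.Icc (-M) N, d i = k) ∧ x₂ - t₂ + 1 ≤ k ∧ k ≤ x₂ - 1) ∨
               ((k ≤ x₂ - t₂ ∨ x₂ ≤ k) ∧ ¬ ∃ i ∈ Finset.Icc (-M) N, d i = k))) →
            (∀ y : ℝ,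
              (∃ k : ℤ, y = (k : ℝ) / n ∧
                (((∃ i ∈ Finset.Icc (-M) N, d i = k) ∧ x₂ - t₂ + 1 ≤ k ∧ k ≤ x₂ - 1) ∨
                 ((k ≤ x₂ - t₂ ∨ x₂ ≤ k) ∧ ¬ ∃ i ∈ Finset.Icc (-M) N, d i = k))) →
              ‖z - (xs : ℂ)‖ ≤ ‖z - (y : ℂ)‖) →
            ∀ s : ℝ,
              ((∃ i ∈ Finset.Icc (-M) N, ((d i : ℤ) : ℝ) = n * xs) → s = 1) →
              ((¬ ∃ i ∈ Finset.Icc (-M) N, ((d i : ℤ) : ℝ) = n * xs) → s = -1) →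
              ‖L - (s : ℂ) / ((n : ℂ) * (z - (xs : ℂ)))‖ ≤ C * Real.log n := by
  have hCφ : 0 ≤ log ((1 - φ) / φ) := log_nonneg ((le_div_iff₀ hφ.1).2 (by linarith [hφ.2]))
  have hC₀' : 0 ≤ log (3 * C₀) := log_nonneg (by linarith)
  refine ⟨(log ((1 - φ) / φ) + 36 + 8 * log (3 * C₀)) / log 2 + 8, by positivity, ?_⟩
  intro n hn β hβ M N hM hN hMn hNn d hd _ x₂ t₂ _ ht₂ ht₂n z _
  have hn2 : (2 : ℝ) ≤ n := by exact_mod_cast hn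
  set w := (n : ℂ) * z
  set D := (Icc (-M) N).image d
  set G := Icc (x₂ - t₂ + 1) (x₂ - 1)
  obtain ⟨S, hS, hSle⟩ := exists_tendsto_sum_Icc_inv_sub w
  refine ⟨∑ k ∈ D, (w - k)⁻¹ - (S - ∑ k ∈ G, (w - k)⁻¹) + (log (β / (1 - β)) : ℂ), ?_, ?_⟩
  · rw [sum_image fun i hi j hj h => hd.injOn (by simpa using hi) (by simpa using hj) h]
    simpa only [one_div] using
      (tendsto_const_nhds.sub (tendsto_sum_Icc_one_div_add_add ht₂ hS)).add_const _
  rintro xs ⟨ks, rfl, hks⟩ hmin s hs1 hs2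
  have hnks : (n : ℝ) * (ks / n) = ks := by field_simp
  simp only [hnks, Int.cast_inj, ← mem_image] at hs1 hs2
  have hmin' : ∀ k : ℤ, (k ∈ D ↔ k ∈ G) → ‖w - ks‖ ≤ ‖w - k‖ := fun k hk =>
    norm_mul_sub_intCast_le (by omega)
      (hmin _ ⟨k, rfl, (mem_gap_pole_iff _ _ _ _).2 (mem_image.symm.trans hk)⟩)
  have hbound := norm_sum_sub_limit_add_sub_pole_le D G ((log (β / (1 - β)) : ℝ) : ℂ)
    (abs_sub_round w.re) hSle hmin' (mem_image.trans ((mem_gap_pole_iff _ _ _ _).1 hks))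
  have hDcard : (D.card : ℝ) ≤ 3 * C₀ * n := by
    have := natCast_card_image_Icc_le d (a := -M) (b := N) (by omega)
    push_cast at this; nlinarith
  have hGcard : (G.card : ℝ) ≤ 3 * C₀ * n := by
    rw [natCast_card_Icc (by omega)]; push_cast; nlinarith
  have hs : (s : ℂ) = if ks ∈ D then 1 else -1 := by
    split_ifs with h
    · simp [hs1 h]
    · simp [hs2 h]
  rw [mul_sub_intCast_div n (by omega), hs, div_eq_mul_inv]
  refine le_mul_log_of_le_add_mul_log hn (by positivity) (hbound.trans ?_)
  rw [Complex.norm_real, norm_eq_abs]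
  linarith [harmonic_le_one_add_log_mul (by linarith) (by omega) hDcard,
    harmonic_le_one_add_log_mul (by linarith) (by omega) hGcard, abs_log_div_one_sub_le hφ.1 hβ]
end

section
/- For every φ ∈ (0, 1/2), K ≥ 1 and ε ∈ (0, 1/2), there exist C > 0 and N ∈ ℕ such that the following holds for all integers n ≥ N. Let t_c ∈ [n^{−1/2+ε}, K], let z_c ∈ (−t_c, 0) be such that B := −z_c/t_c ∈ (φ, 1−φ), and let x₂, t₂ be integers with t₂ ≥ 1, |x₂| ≤ K·n^{1/2}, |t₂ − n·t_c| ≤ K·n^{1/2}, and |x₂ − B(t₂ − n·t_c)| ≤ K·n^{1/4}. Then for every z ∈ ℂ with |z − z_c| ≤ (φ/2)·t_c, | ∑_{i=−x₂+1}^{−x₂+t₂−1} 1/(nz + i) − ∑_{i=0}^{⌊n·t_c⌋−1} 1/(nz + i) | ≤ C·( n^{−3/4}·t_c^{−1} + n^{−1/2}·t_c^{−2}·|z − z_c| ). -/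
/-!
Both sums are Riemann sums of `x ↦ 1 / (n z + x)`, on windows near `x = 0` (of width
`O(K √n)`) and near `x = n t_c`. On these windows `|n z + x| ≥ φ n t_c / 4`, because `Re z`
lies between `-(1 - φ/2) t_c` and `-(φ/2) t_c`; so each sum is its integral up to
`O(K √n / (φ n t_c)²)`. After the substitutions `x = m + (q - m) τ` and `x = a τ` the two
integrals are integrals over `[0, 1]`, and the numerator of the difference of their integrands,
`(q - m - a) n z - a m`, does not depend on `τ`. Writing `n z = -B n t_c + n (z - z_c)`, the
hypothesis `|x₂ - B (t₂ - n t_c)| ≤ K n^{1/4}` makes this numerator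
`O(K n^{1/4} · n t_c + K √n · n |z - z_c|)`, which gives the two terms of the bound.
-/

open MeasureTheory Set

section SumIntegral

variable {E : Type*} [NormedAddCommGroup E] [NormedSpace ℝ E] [CompleteSpace E]

lemma norm_sub_integral_unit_le {f : ℝ → E} {c L : ℝ}
    (hf : IntervalIntegrable f volume c (c + 1))
    (h : ∀ x ∈ Icc c (c + 1), ‖f c - f x‖ ≤ L) :
    ‖f c - ∫ x in c..c + 1, f x‖ ≤ L := by
  have hconst : f c - ∫ x in c..c + 1, f x = ∫ x in c..c + 1, (f c - f x) := by
    simp [intervalIntegral.integral_sub intervalIntegrable_const hf]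
  rw [hconst]
  calc _ ≤ L * |c + 1 - c| := intervalIntegral.norm_integral_le_of_norm_le_const fun x hx =>
        h x (Ioc_subset_Icc_self (by rwa [uIoc_of_le (by linarith)] at hx))
    _ = L := by simp

lemma norm_sum_Ico_sub_integral_le {f : ℝ → E} {L : ℝ} {p q : ℤ} (hpq : p ≤ q)
    (hf : ContinuousOn f (Icc (p : ℝ) q))
    (hL : ∀ x ∈ Icc (p : ℝ) q, ∀ y ∈ Icc (p : ℝ) q, ‖f x - f y‖ ≤ L * |x - y|) :
    ‖∑ i ∈ Finset.Ico p q, f i - ∫ x in (p : ℝ)..q, f x‖ ≤ (q - p) * L := by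
  induction q, hpq using Int.leInduction with
  | base => simp
  | succ q hpq ih =>
    push_cast at hf hL ⊢
    have hpq' : (p : ℝ) ≤ q := by exact_mod_cast hpq
    have hsub : Icc (p : ℝ) q ⊆ Icc (p : ℝ) (q + 1) := Icc_subset_Icc_right (by linarith)
    have hsub' : Icc (q : ℝ) (q + 1) ⊆ Icc (p : ℝ) (q + 1) := Icc_subset_Icc_left hpq'
    have hq : (q : ℝ) ∈ Icc (p : ℝ) (q + 1) := ⟨hpq', by linarith⟩
    have hint₁ : IntervalIntegrable f volume p q :=
      (hf.mono hsub).intervalIntegrable_of_Icc hpq'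
    have hint₂ : IntervalIntegrable f volume q (q + 1) :=
      (hf.mono hsub').intervalIntegrable_of_Icc (by linarith)
    have hL0 : 0 ≤ L := by
      have := hL q hq (q + 1) ⟨by linarith, le_rfl⟩
      norm_num at this
      exact (norm_nonneg _).trans this
    have hstep : ‖f q - ∫ x in (q : ℝ)..q + 1, f x‖ ≤ L :=
      norm_sub_integral_unit_le hint₂ fun x hx =>
        (hL q hq x (hsub' hx)).trans (mul_le_of_le_one_right hL0
          (abs_le.mpr ⟨by linarith [hx.2], by linarith [hx.1]⟩))
    rw [← Finset.sum_Ico_add_eq_sum_Ico_add_one hpq,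
      ← intervalIntegral.integral_add_adjacent_intervals hint₁ hint₂]
    calc _ = ‖(∑ i ∈ Finset.Ico p q, f i - ∫ x in (p : ℝ)..q, f x)
          + (f q - ∫ x in (q : ℝ)..q + 1, f x)‖ := by congr 1; abel
      _ ≤ (q - p) * L + L := norm_add_le_of_le
          (ih (hf.mono hsub) fun x hx y hy => hL x (hsub hx) y (hsub hy)) hstep
      _ = _ := by ring

lemma norm_sum_Ico_sub_sum_Ico_sub_integral_le {f : ℝ → E} {L : ℝ} {b p q : ℤ}
    (hp : b ≤ p) (hq : b ≤ q) (hf : ContinuousOn f (uIcc (p : ℝ) q))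
    (hL : ∀ x ∈ uIcc (p : ℝ) q, ∀ y ∈ uIcc (p : ℝ) q, ‖f x - f y‖ ≤ L * |x - y|) :
    ‖(∑ i ∈ Finset.Ico b q, f i - ∑ i ∈ Finset.Ico b p, f i) - ∫ x in (p : ℝ)..q, f x‖ ≤
      |(q : ℝ) - p| * L := by
  wlog hpq : p ≤ q generalizing p q
  · have h := this hq hp (uIcc_comm (p : ℝ) q ▸ hf) (uIcc_comm (p : ℝ) q ▸ hL) (by omega)
    rw [abs_sub_comm, ← norm_neg, intervalIntegral.integral_symm]
    refine le_of_eq_of_le (congrArg _ ?_) h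
    abel
  have hpq' : (p : ℝ) ≤ q := by exact_mod_cast hpq
  rw [uIcc_of_le hpq'] at hf hL
  rw [abs_of_nonneg (sub_nonneg.mpr hpq'), ← Finset.Ico_union_Ico_eq_Ico hp hpq,
    Finset.sum_union (Finset.Ico_disjoint_Ico_consecutive b p q), add_sub_cancel_left]
  exact norm_sum_Ico_sub_integral_le hpq hf hL

end SumIntegral

lemma norm_inv_sub_inv_le {𝕜 : Type*} [NormedDivisionRing 𝕜] {a b : 𝕜} {d : ℝ} (hd : 0 < d)
    (ha : d ≤ ‖a‖) (hb : d ≤ ‖b‖) : ‖a⁻¹ - b⁻¹‖ ≤ ‖b - a‖ / d ^ 2 := by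
  have ha0 : a ≠ 0 := norm_pos_iff.mp (hd.trans_le ha)
  have hb0 : b ≠ 0 := norm_pos_iff.mp (hd.trans_le hb)
  rw [inv_sub_inv' ha0 hb0, norm_mul, norm_mul, norm_inv, norm_inv, div_eq_mul_inv]
  calc ‖a‖⁻¹ * ‖b - a‖ * ‖b‖⁻¹ ≤ d⁻¹ * ‖b - a‖ * d⁻¹ := by gcongr
    _ = ‖b - a‖ * (d ^ 2)⁻¹ := by ring

section InvAddOfReal

variable (w : ℂ) {s : Set ℝ} {d : ℝ}

lemma continuousOn_inv_add_ofReal (hd : 0 < d) (hs : ∀ x ∈ s, d ≤ ‖w + x‖) :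
    ContinuousOn (fun x : ℝ => (w + x)⁻¹) s :=
  (continuous_const.add Complex.continuous_ofReal).continuousOn.inv₀ fun x hx =>
    norm_pos_iff.mp (hd.trans_le (hs x hx))

lemma norm_inv_add_ofReal_sub_le (hd : 0 < d) (hs : ∀ x ∈ s, d ≤ ‖w + x‖) :
    ∀ x ∈ s, ∀ y ∈ s, ‖(w + x)⁻¹ - (w + y)⁻¹‖ ≤ (d ^ 2)⁻¹ * |x - y| := fun x hx y hy => by
  have h := norm_inv_sub_inv_le hd (hs x hx) (hs y hy)
  rwa [add_sub_add_left_eq_sub, ← Complex.ofReal_sub, Complex.norm_real, Real.norm_eq_abs,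
    abs_sub_comm, div_eq_inv_mul] at h

end InvAddOfReal

lemma add_mul_mem_uIcc {p P τ : ℝ} (hτ : τ ∈ Icc (0 : ℝ) 1) : p + P * τ ∈ uIcc p (p + P) := by
  rcases le_total 0 P with hP | hP
  · rw [uIcc_of_le (by linarith)]
    constructor <;> nlinarith [hτ.1, hτ.2]
  · rw [uIcc_of_ge (by linarith)]
    constructor <;> nlinarith [hτ.1, hτ.2]

lemma integral_inv_add_ofReal_eq (w : ℂ) (p P : ℝ) :
    ∫ x in p..p + P, (w + x)⁻¹ = ∫ τ in (0 : ℝ)..1, (P : ℂ) * (w + ↑(p + P * τ))⁻¹ := by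
  have h := intervalIntegral.smul_integral_comp_mul_add (a := 0) (b := 1)
    (fun x : ℝ => (w + x)⁻¹) P p
  rw [mul_zero, zero_add, mul_one, add_comm P p, Complex.real_smul,
    ← intervalIntegral.integral_const_mul] at h
  rw [← h]
  simp only [add_comm _ p]

lemma norm_integral_inv_sub_integral_inv_le (w : ℂ) {d : ℝ} (hd : 0 < d) (p P Q : ℝ)
    (hP : ∀ x ∈ uIcc p (p + P), d ≤ ‖w + x‖) (hQ : ∀ x ∈ uIcc 0 Q, d ≤ ‖w + x‖) :
    ‖(∫ x in p..p + P, (w + x)⁻¹) - ∫ x in (0 : ℝ)..Q, (w + x)⁻¹‖ ≤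
      ‖((P - Q : ℝ) : ℂ) * w - ↑(Q * p)‖ / d ^ 2 := by
  have hP' : ∀ τ ∈ Icc (0 : ℝ) 1, d ≤ ‖w + ↑(p + P * τ)‖ := fun τ hτ => hP _ (add_mul_mem_uIcc hτ)
  have hQ' : ∀ τ ∈ Icc (0 : ℝ) 1, d ≤ ‖w + ↑(0 + Q * τ)‖ := fun τ hτ =>
    hQ _ (by simpa using add_mul_mem_uIcc (p := 0) (P := Q) hτ)
  have hint : ∀ c C : ℝ, (∀ τ ∈ Icc (0 : ℝ) 1, d ≤ ‖w + ↑(c + C * τ)‖) →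
      IntervalIntegrable (fun τ : ℝ => (C : ℂ) * (w + ↑(c + C * τ))⁻¹) volume 0 1 := by
    intro c C h
    refine ContinuousOn.intervalIntegrable_of_Icc zero_le_one (continuousOn_const.mul ?_)
    refine (Continuous.continuousOn (by fun_prop)).inv₀ fun τ hτ => ?_
    exact norm_pos_iff.mp (hd.trans_le (h τ hτ))
  rw [← zero_add Q, integral_inv_add_ofReal_eq, integral_inv_add_ofReal_eq,
    ← intervalIntegral.integral_sub (hint p P hP') (hint 0 Q hQ'), zero_add]
  calc _ ≤ ‖((P - Q : ℝ) : ℂ) * w - ↑(Q * p)‖ / d ^ 2 * |1 - 0| := by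
        refine intervalIntegral.norm_integral_le_of_norm_le_const fun τ hτ => ?_
        rw [uIoc_of_le zero_le_one] at hτ
        have h₁ := hP' τ (Ioc_subset_Icc_self hτ)
        have h₂ := hQ' τ (Ioc_subset_Icc_self hτ)
        have h₁0 : w + ↑(p + P * τ) ≠ 0 := norm_pos_iff.mp (hd.trans_le h₁)
        have h₂0 : w + ↑(0 + Q * τ) ≠ 0 := norm_pos_iff.mp (hd.trans_le h₂)
        -- the terms linear in `τ` cancel in the numerator
        have hid : (P : ℂ) * (w + ↑(p + P * τ))⁻¹ - (Q : ℂ) * (w + ↑(0 + Q * τ))⁻¹ =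
            (((P - Q : ℝ) : ℂ) * w - ↑(Q * p)) *
              ((w + ↑(p + P * τ))⁻¹ * (w + ↑(0 + Q * τ))⁻¹) := by
          have hfrac : ∀ A B : ℂ, A ≠ 0 → B ≠ 0 →
              (P : ℂ) * A⁻¹ - Q * B⁻¹ = (P * B - Q * A) * (A⁻¹ * B⁻¹) := by
            intro A B hA hB
            field_simp
          rw [hfrac _ _ h₁0 h₂0]
          push_cast
          ring
        rw [hid, norm_mul, div_eq_mul_inv]
        gcongr
        rw [norm_mul, norm_inv, norm_inv, pow_two, mul_inv]
        gcongr
    _ = _ := by simp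

lemma norm_sum_inv_sub_sum_inv_le (w : ℂ) {d : ℝ} (hd : 0 < d) {a q m : ℤ} (haq : a ≤ q)
    (hm : 0 ≤ m) (h₀ : ∀ x ∈ uIcc (0 : ℝ) a, d ≤ ‖w + x‖)
    (h₁ : ∀ x ∈ uIcc (m : ℝ) q, d ≤ ‖w + x‖) :
    ‖∑ i ∈ Finset.Ico a q, (w + i)⁻¹ - ∑ i ∈ Finset.Ico 0 m, (w + i)⁻¹‖ ≤
      (|(q : ℝ) - m| + |(a : ℝ)| + ‖(((q : ℝ) - m - a : ℝ) : ℂ) * w - ↑((a : ℝ) * m)‖) /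
        d ^ 2 := by
  -- sums over `Ico b k` from a common base `b` serve as signed partial sums
  set b := min a 0
  set S : ℤ → ℂ := fun k => ∑ i ∈ Finset.Ico b k, (w + ((i : ℝ) : ℂ))⁻¹
  set I : ℝ → ℝ → ℂ := fun x y => ∫ t in x..y, (w + t)⁻¹
  have hsum : ∀ {p r : ℤ}, b ≤ p → p ≤ r →
      ∑ i ∈ Finset.Ico p r, (w + i)⁻¹ = S r - S p := by
    intro p r hp hpr
    simp only [S, Complex.ofReal_intCast]
    rw [← Finset.Ico_union_Ico_eq_Ico hp hpr,
      Finset.sum_union (Finset.Ico_disjoint_Ico_consecutive b p r), add_sub_cancel_left]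
  have hcmp : ∀ {p r : ℤ}, b ≤ p → b ≤ r → (∀ x ∈ uIcc (p : ℝ) r, d ≤ ‖w + x‖) →
      ‖(S r - S p) - I p r‖ ≤ |(r : ℝ) - p| / d ^ 2 := by
    intro p r hp hr h
    rw [div_eq_mul_inv]
    exact norm_sum_Ico_sub_sum_Ico_sub_integral_le hp hr (continuousOn_inv_add_ofReal w hd h)
      (norm_inv_add_ofReal_sub_le w hd h)
  have hI := norm_integral_inv_sub_integral_inv_le w hd m (q - m) a
    (by rwa [add_sub_cancel]) h₀
  rw [add_sub_cancel] at hI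
  rw [hsum (min_le_left a 0) haq, hsum (min_le_right a 0) hm]
  calc _ = ‖((S q - S m) - I m q) - ((S a - S 0) - I 0 a) + (I m q - I 0 a)‖ := by
        congr 1; ring
    _ ≤ |(q : ℝ) - m| / d ^ 2 + |(a : ℝ) - 0| / d ^ 2 +
        ‖(((q : ℝ) - m - a : ℝ) : ℂ) * w - ↑((a : ℝ) * m)‖ / d ^ 2 := by
      refine norm_add_le_of_le (norm_sub_le_of_le ?_ ?_) ?_
      · exact hcmp (min_le_right a 0 |>.trans hm) (min_le_left a 0 |>.trans haq) h₁
      · have h := hcmp (min_le_right a 0) (min_le_left a 0) (by rwa [Int.cast_zero])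
        rwa [Int.cast_zero] at h
      · exact hI
    _ = _ := by rw [sub_zero]; ring

lemma le_norm_add_ofReal_of_re_mem {w : ℂ} {T φ x : ℝ}
    (hw : w.re ∈ Icc (-(1 - φ / 2) * T) (-(φ / 2) * T))
    (hx : |x| ≤ φ / 4 * T ∨ |x - T| ≤ φ / 4 * T) : φ / 4 * T ≤ ‖w + x‖ := by
  refine le_trans ?_ (Complex.abs_re_le_norm (w + x))
  rw [Complex.add_re, Complex.ofReal_re, le_abs]
  rcases hx with hx | hx <;> [right; left] <;>
    linarith [(abs_le.mp hx).1, (abs_le.mp hx).2, hw.1, hw.2]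

lemma abs_numerator_at_saddle_le {T B L M x t m : ℝ} (hT : 0 ≤ T) (hB : B ∈ Icc (0 : ℝ) 1)
    (hm : m ≤ T) (hm' : T < m + 1) (hx : |x| ≤ L) (hxt : |x - B * (t - T)| ≤ M) :
    |(t - 1 - m) * (B * T) + (1 - x) * m| ≤ T * M + T + 1 + L := by
  -- write `m = T - θ` with `θ ∈ [0, 1)`: only `x - B (t - T)`, which is small, multiplies `T`
  have hid : (t - 1 - m) * (B * T) + (1 - x) * m =
      -(T * (x - B * (t - T))) + T * (1 - B * (1 - (T - m))) - (T - m) * (1 - x) := by ring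
  have h₁ : |T * (x - B * (t - T))| ≤ T * M := by
    rw [abs_mul, abs_of_nonneg hT]; exact mul_le_mul_of_nonneg_left hxt hT
  have h₂ : |T * (1 - B * (1 - (T - m)))| ≤ T := by
    rw [abs_mul, abs_of_nonneg hT]
    refine mul_le_of_le_one_right hT (abs_le.mpr ⟨?_, ?_⟩) <;> nlinarith [hB.1, hB.2]
  have h₃ : |(T - m) * (1 - x)| ≤ 1 + L := by
    have h1x : |1 - x| ≤ 1 + L := (abs_sub _ _).trans (by rw [abs_one]; linarith)
    rw [abs_mul, abs_of_nonneg (by linarith)]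
    nlinarith [abs_nonneg (1 - x)]
  rw [hid]
  calc _ ≤ |-(T * (x - B * (t - T))) + T * (1 - B * (1 - (T - m)))| + |(T - m) * (1 - x)| :=
        abs_sub _ _
    _ ≤ |T * (x - B * (t - T))| + |T * (1 - B * (1 - (T - m)))| + |(T - m) * (1 - x)| := by
        grw [abs_add_le, abs_neg]
    _ ≤ _ := by linarith

lemma norm_numerator_at_saddle_le {T B L M x t m n zc : ℝ} {z : ℂ} (hT : 0 ≤ T)
    (hB : B ∈ Icc (0 : ℝ) 1) (hm : m ≤ T) (hm' : T < m + 1) (hx : |x| ≤ L) (ht : |t - T| ≤ L)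
    (hxt : |x - B * (t - T)| ≤ M) (hn : 0 ≤ n) (hzc : n * zc = -(B * T)) :
    ‖((t - x - m - (1 - x) : ℝ) : ℂ) * (n * z) - ↑((1 - x) * m)‖ ≤
      T * M + T + 1 + L + (L + 1) * (n * ‖z - zc‖) := by
  have hzc' : (n : ℂ) * zc = -(B * T) := by exact_mod_cast hzc
  have hsplit : ((t - x - m - (1 - x) : ℝ) : ℂ) * (n * z) - ↑((1 - x) * m) =
      ↑(-((t - 1 - m) * (B * T) + (1 - x) * m)) + ↑((t - 1 - m) * n) * (z - zc) := by
    push_cast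
    linear_combination (↑t - 1 - ↑m) * hzc'
  have htm : |t - 1 - m| ≤ L + 1 := abs_le.mpr
    ⟨by linarith [(abs_le.mp ht).1], by linarith [(abs_le.mp ht).2]⟩
  rw [hsplit]
  refine (norm_add_le _ _).trans (add_le_add ?_ ?_)
  · rw [Complex.norm_real, Real.norm_eq_abs, abs_neg]
    exact abs_numerator_at_saddle_le hT hB hm hm' hx hxt
  · rw [norm_mul, Complex.norm_real, Real.norm_eq_abs, abs_mul, abs_of_nonneg hn, mul_assoc]
    gcongr

lemma re_natCast_mul_mem_Icc {n : ℕ} {tc B φ : ℝ} {z : ℂ} (htc : 0 ≤ tc)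
    (hB : B ∈ Ioo φ (1 - φ)) (hz : ‖z - ↑(-(B * tc))‖ ≤ φ / 2 * tc) :
    ((n : ℂ) * z).re ∈ Icc (-(1 - φ / 2) * (n * tc)) (-(φ / 2) * (n * tc)) := by
  have hre : |z.re + B * tc| ≤ φ / 2 * tc := by
    simpa using (Complex.abs_re_le_norm _).trans hz
  obtain ⟨hre₁, hre₂⟩ := abs_le.mp hre
  have hBtc₁ : φ * tc ≤ B * tc := mul_le_mul_of_nonneg_right hB.1.le htc
  have hBtc₂ : B * tc ≤ (1 - φ) * tc := mul_le_mul_of_nonneg_right hB.2.le htc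
  have hn : (0 : ℝ) ≤ n := n.cast_nonneg
  rw [← Complex.ofReal_natCast, Complex.re_ofReal_mul]
  constructor
  · nlinarith [mul_le_mul_of_nonneg_left (show -(1 - φ / 2) * tc ≤ z.re by linarith) hn]
  · nlinarith [mul_le_mul_of_nonneg_left (show z.re ≤ -(φ / 2) * tc by linarith) hn]

lemma error_div_sq_le_of_scale {φ K u tc Z a b c : ℝ} (hφ : 0 < φ) (hK : 1 ≤ K) (hu : 1 ≤ u)
    (hutc : 1 ≤ u ^ 3 * tc) (hZ : 0 ≤ Z) (ha : a ≤ 2 * (K * u ^ 2) + 1)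
    (hb : b ≤ K * u ^ 2 + 1) (hc : c ≤ u ^ 4 * tc * (K * u) + u ^ 4 * tc + 1 + K * u ^ 2 +
      (K * u ^ 2 + 1) * (u ^ 4 * Z)) :
    (a + b + c) / (φ / 4 * (u ^ 4 * tc)) ^ 2 ≤
      144 * K / φ ^ 2 * ((u ^ 3)⁻¹ / tc + (u ^ 2)⁻¹ / tc ^ 2 * Z) := by
  have htc : 0 < tc := by nlinarith [pow_pos (zero_lt_one.trans_le hu) 3]
  have hrhs : 144 * K / φ ^ 2 * ((u ^ 3)⁻¹ / tc + (u ^ 2)⁻¹ / tc ^ 2 * Z) *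
      (φ / 4 * (u ^ 4 * tc)) ^ 2 = 9 * K * (u ^ 5 * tc + u ^ 6 * Z) := by
    field_simp; ring
  rw [div_le_iff₀ (by positivity), hrhs]
  have hKu : 1 ≤ K * u ^ 2 := one_le_mul_of_one_le_of_one_le hK (one_le_pow₀ hu)
  have hL : K * u ^ 2 ≤ K * u ^ 5 * tc := calc
    K * u ^ 2 = K * u ^ 2 * 1 := (mul_one _).symm
    _ ≤ K * u ^ 2 * (u ^ 3 * tc) := mul_le_mul_of_nonneg_left hutc (by positivity)
    _ = K * u ^ 5 * tc := by ring
  have hT : u ^ 4 * tc ≤ K * u ^ 5 * tc := calc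
    u ^ 4 * tc = u ^ 4 * tc * 1 := (mul_one _).symm
    _ ≤ u ^ 4 * tc * (K * u) :=
        mul_le_mul_of_nonneg_left (one_le_mul_of_one_le_of_one_le hK hu) (by positivity)
    _ = K * u ^ 5 * tc := by ring
  have hnZ : (K * u ^ 2 + 1) * (u ^ 4 * Z) ≤ 2 * K * u ^ 6 * Z := calc
    _ ≤ 2 * (K * u ^ 2) * (u ^ 4 * Z) := mul_le_mul_of_nonneg_right (by linarith) (by positivity)
    _ = 2 * K * u ^ 6 * Z := by ring
  have hTM : u ^ 4 * tc * (K * u) = K * u ^ 5 * tc := by ring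
  have hKZ : 0 ≤ K * u ^ 6 * Z := by positivity
  linarith

lemma norm_sum_difference_le_of_scale {φ K u tc zc B : ℝ} {n t₂ : ℕ} {x₂ : ℤ} {z : ℂ}
    (hφ : 0 < φ) (hK : 1 ≤ K) (hu : 1 ≤ u) (hn : (n : ℝ) = u ^ 4)
    (hscale : 12 * K ≤ φ * (u ^ 2 * tc)) (hzc : zc = -(B * tc)) (hB : B ∈ Ioo φ (1 - φ))
    (ht₂ : 1 ≤ t₂) (hx₂ : |(x₂ : ℝ)| ≤ K * u ^ 2) (ht₂c : |(t₂ : ℝ) - n * tc| ≤ K * u ^ 2)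
    (hx₂c : |(x₂ : ℝ) - B * ((t₂ : ℝ) - n * tc)| ≤ K * u) (hz : ‖z - (zc : ℂ)‖ ≤ φ / 2 * tc) :
    ‖(∑ i ∈ Finset.Icc (-x₂ + 1) (-x₂ + (t₂ : ℤ) - 1), 1 / ((n : ℂ) * z + (i : ℂ))) -
        ∑ i ∈ Finset.Icc (0 : ℤ) (⌊(n : ℝ) * tc⌋ - 1), 1 / ((n : ℂ) * z + (i : ℂ))‖ ≤
      144 * K / φ ^ 2 * ((u ^ 3)⁻¹ / tc + (u ^ 2)⁻¹ / tc ^ 2 * ‖z - (zc : ℂ)‖) := by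
  have hutc : 24 ≤ u ^ 2 * tc := by nlinarith [hB.1, hB.2]
  have htc : 0 < tc := by nlinarith [sq_nonneg u]
  have hT : 0 ≤ (n : ℝ) * tc := by positivity
  have hLT : 3 * (K * u ^ 2) ≤ φ / 4 * (n * tc) := by rw [hn]; nlinarith
  have hL1 : 1 ≤ K * u ^ 2 := one_le_mul_of_one_le_of_one_le hK (one_le_pow₀ hu)
  have hw := re_natCast_mul_mem_Icc (n := n) htc.le hB (hzc ▸ hz)
  have hfloor : (⌊(n : ℝ) * tc⌋ : ℝ) ≤ n * tc := Int.floor_le _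
  have hfloor' : (n : ℝ) * tc < ⌊(n : ℝ) * tc⌋ + 1 := Int.lt_floor_add_one _
  obtain ⟨hx₂₁, hx₂₂⟩ := abs_le.mp hx₂
  obtain ⟨ht₂₁, ht₂₂⟩ := abs_le.mp ht₂c
  have h₀ : ∀ x ∈ uIcc (0 : ℝ) ((1 - x₂ : ℤ) : ℝ), φ / 4 * (n * tc) ≤ ‖(n : ℂ) * z + x‖ := by
    intro x hx
    have hx' := uIcc_subset_Icc (a₂ := -(φ / 4 * (n * tc))) (b₂ := φ / 4 * (n * tc))
      ⟨by linarith, by linarith⟩ ⟨by push_cast; linarith, by push_cast; linarith⟩ hx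
    exact le_norm_add_ofReal_of_re_mem hw (Or.inl (abs_le.mpr hx'))
  have h₁ : ∀ x ∈ uIcc (⌊(n : ℝ) * tc⌋ : ℝ) ((t₂ - x₂ : ℤ) : ℝ),
      φ / 4 * (n * tc) ≤ ‖(n : ℂ) * z + x‖ := by
    intro x hx
    have hx' := uIcc_subset_Icc (a₂ := n * tc - φ / 4 * (n * tc))
      (b₂ := n * tc + φ / 4 * (n * tc))
      ⟨by linarith, by linarith⟩ ⟨by push_cast; linarith, by push_cast; linarith⟩ hx
    exact le_norm_add_ofReal_of_re_mem hw
      (Or.inr (abs_le.mpr ⟨by linarith [hx'.1], by linarith [hx'.2]⟩))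
  have hcore := norm_sum_inv_sub_sum_inv_le ((n : ℂ) * z) (by linarith) (by omega)
    (Int.floor_nonneg.mpr hT) h₀ h₁
  have hnum := norm_numerator_at_saddle_le (z := z) (zc := zc) (n := n) (t := t₂) (x := x₂)
    hT ⟨by linarith [hB.1], by linarith [hB.2]⟩ hfloor hfloor' hx₂ ht₂c hx₂c n.cast_nonneg
    (by rw [hzc]; ring)
  rw [Finset.Icc_sub_one_right_eq_Ico, Finset.Icc_sub_one_right_eq_Ico,
    show -x₂ + 1 = 1 - x₂ by ring, show -x₂ + t₂ = t₂ - x₂ by ring]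
  simp only [one_div]
  refine hcore.trans ?_
  push_cast at hnum ⊢
  rw [hn] at hnum ht₂₁ ht₂₂ hfloor hfloor' ⊢
  exact error_div_sq_le_of_scale hφ hK hu (by nlinarith) (norm_nonneg _)
    (abs_le.mpr ⟨by linarith, by linarith⟩) (abs_le.mpr ⟨by linarith, by linarith⟩) hnum

lemma rpow_div_four_eq_pow {x : ℝ} (hx : 0 ≤ x) (k : ℕ) :
    x ^ ((k : ℝ) / 4) = (x ^ ((1 : ℝ) / 4)) ^ k := by
  rw [← Real.rpow_natCast, ← Real.rpow_mul hx]
  ring_nf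

/-- Lemma 4.10 of the paper: near the saddle point `z_c`, the derivative of the key
function `D₂` differs from the derivative of its time-`t_c` reference version only
through the displayed difference of finite sums, which is quantitatively small. -/
theorem key_function_sum_difference
    (φ K ε : ℝ) (hφ : φ ∈ Set.Ioo (0 : ℝ) (1 / 2)) (hK : 1 ≤ K)
    (hε : ε ∈ Set.Ioo (0 : ℝ) (1 / 2)) :
    ∃ C : ℝ, 0 < C ∧ ∃ N : ℕ, ∀ n : ℕ, N ≤ n →
      ∀ tc zc B : ℝ,
        (n : ℝ) ^ (-(1 : ℝ) / 2 + ε) ≤ tc → tc ≤ K →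
        -tc < zc → zc < 0 → B = -zc / tc → B ∈ Set.Ioo φ (1 - φ) →
      ∀ t₂ : ℕ, 1 ≤ t₂ →
      ∀ x₂ : ℤ,
        |(x₂ : ℝ)| ≤ K * (n : ℝ) ^ ((1 : ℝ) / 2) →
        |(t₂ : ℝ) - n * tc| ≤ K * (n : ℝ) ^ ((1 : ℝ) / 2) →
        |(x₂ : ℝ) - B * ((t₂ : ℝ) - n * tc)| ≤ K * (n : ℝ) ^ ((1 : ℝ) / 4) →
      ∀ z : ℂ, ‖z - (zc : ℂ)‖ ≤ (φ / 2) * tc →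
        ‖(∑ i ∈ Finset.Icc (-x₂ + 1) (-x₂ + (t₂ : ℤ) - 1), 1 / ((n : ℂ) * z + (i : ℂ))) -
              ∑ i ∈ Finset.Icc (0 : ℤ) (⌊(n : ℝ) * tc⌋ - 1), 1 / ((n : ℂ) * z + (i : ℂ))‖ ≤
          C * ((n : ℝ) ^ (-(3 : ℝ) / 4) / tc +
            (n : ℝ) ^ (-(1 : ℝ) / 2) / tc ^ 2 * ‖z - (zc : ℂ)‖) := by
  obtain ⟨hφ0, -⟩ := hφ
  obtain ⟨N, hN⟩ := Filter.eventually_atTop.mp <|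
    ((tendsto_rpow_atTop hε.1).comp tendsto_natCast_atTop_atTop).eventually_ge_atTop (12 * K / φ)
  refine ⟨144 * K / φ ^ 2, by positivity, max N 1, ?_⟩
  intro n hn tc zc B htc _ _ _ hB hBφ t₂ ht₂ x₂ hx₂ ht₂c hx₂c z hz
  have hn1 : (1 : ℝ) ≤ n := by exact_mod_cast le_of_max_le_right hn
  have hn0 : (0 : ℝ) < n := by linarith
  have htc0 : 0 < tc := (Real.rpow_pos_of_pos hn0 _).trans_le htc
  set u := (n : ℝ) ^ ((1 : ℝ) / 4)
  have hpow := rpow_div_four_eq_pow hn0.le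
  have hu : 1 ≤ u := Real.one_le_rpow hn1 (by norm_num)
  have hnu : (n : ℝ) = u ^ 4 := by rw [← hpow 4]; norm_num
  have h12 : (n : ℝ) ^ ((1 : ℝ) / 2) = u ^ 2 := by rw [← hpow 2]; norm_num
  have h34 : (n : ℝ) ^ (-(3 : ℝ) / 4) = (u ^ 3)⁻¹ := by
    rw [← hpow 3, ← Real.rpow_neg hn0.le]; norm_num
  have h12' : (n : ℝ) ^ (-(1 : ℝ) / 2) = (u ^ 2)⁻¹ := by
    rw [← h12, ← Real.rpow_neg hn0.le]; norm_num
  have hscale : 12 * K ≤ φ * (u ^ 2 * tc) := by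
    have hε' : (n : ℝ) ^ ε = u ^ 2 * (n : ℝ) ^ (-(1 : ℝ) / 2 + ε) := by
      rw [← h12, ← Real.rpow_add hn0]; norm_num
    have hNn : 12 * K / φ ≤ (n : ℝ) ^ ε := hN n (le_of_max_le_left hn)
    calc 12 * K ≤ φ * (n : ℝ) ^ ε := (div_le_iff₀' hφ0).mp hNn
      _ ≤ φ * (u ^ 2 * tc) := by rw [hε']; gcongr
  rw [h12] at hx₂ ht₂c
  rw [h34, h12']
  exact norm_sum_difference_le_of_scale hφ0 hK hu hnu hscale
    (by rw [hB]; field_simp) hBφ ht₂ hx₂ ht₂c hx₂c hz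
end

section
/- Let ξ > 0 and define the shifted lattice Λ′ := {(2a+1)ξ + (2b+1)ξ·i : a, b ∈ ℤ} ⊂ ℂ. Let K ⊆ ℂ be a connected, unbounded set and let q ∈ K. Then there exists a sequence (z_k)_{k ∈ ℕ} of pairwise distinct points of Λ′ such that: |z₀ − q| ≤ 2ξ; z_{k+1} − z_k ∈ {2ξ, −2ξ, 2ξ·i, −2ξ·i} for every k (so consecutive points are nearest neighbors of the lattice Λ′); for every k the closed square z_k + [−ξ, ξ] + i·[−ξ, ξ] intersects K; and |z_k| → ∞ as k → ∞. -/
/-!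
Index the mesh squares by `ℤ²` and join two nearest-neighbour cells when both of their squares
meet `K`. A point close to `x` lies only in squares that contain `x`, so the component of the
cell of `x` in this graph is locally constant along `K`; since `K` is preconnected, the cells of
all points of `K` lie in one component, which is infinite because `K` is unbounded. The graph is
locally finite, so Kőnig's lemma gives an injective ray from the cell of `q`, and the centres of
its cells escape to infinity because only finitely many centres lie in any disc.
-/

open Filter Set Topology

namespace SimpleGraph

variable {V : Type*} (G : SimpleGraph V) (v : V)

/-- The vertices reachable from `v`, where `a ≤ b` means that `a` lies on a shortest path
from `v` to `b`. -/
def GeodesicOrder : Type _ := {w // G.Reachable v w}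

namespace GeodesicOrder

variable {G v}

instance : PartialOrder (G.GeodesicOrder v) where
  le a b := G.dist v a.1 + G.dist a.1 b.1 = G.dist v b.1
  le_refl a := by simp
  le_trans a b c hab hbc := by
    have h₁ := (a.2.symm.trans b.2).dist_triangle_left c.1
    have h₂ := a.2.dist_triangle_left c.1
    change G.dist v a.1 + G.dist a.1 b.1 = G.dist v b.1 at hab
    change G.dist v b.1 + G.dist b.1 c.1 = G.dist v c.1 at hbc
    change G.dist v a.1 + G.dist a.1 c.1 = G.dist v c.1
    omega
  le_antisymm a b hab hba := by
    change G.dist v a.1 + G.dist a.1 b.1 = G.dist v b.1 at hab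
    change G.dist v b.1 + G.dist b.1 a.1 = G.dist v a.1 at hba
    have hab₀ : G.dist a.1 b.1 = 0 := by omega
    exact Subtype.ext ((dist_eq_zero_iff_eq_or_not_reachable.1 hab₀).resolve_right
      (not_not.2 (a.2.symm.trans b.2)))

lemma le_def {a b : G.GeodesicOrder v} :
    a ≤ b ↔ G.dist v a.1 + G.dist a.1 b.1 = G.dist v b.1 := Iff.rfl

lemma dist_lt_dist_of_lt {a b : G.GeodesicOrder v} (h : a < b) : G.dist v a.1 < G.dist v b.1 := by
  have hpos : G.dist a.1 b.1 ≠ 0 := dist_ne_zero_iff_ne_and_reachable.2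
    ⟨fun hab => h.ne (Subtype.ext hab), a.2.symm.trans b.2⟩
  have := le_def.1 h.le
  omega

/-- The second vertex of a shortest path from `a` to `b`. -/
lemma exists_covBy_adj_le {a b : G.GeodesicOrder v} (h : a < b) :
    ∃ c, a ⋖ c ∧ G.Adj a.1 c.1 ∧ c ≤ b := by
  obtain ⟨p, hp⟩ := (a.2.symm.trans b.2).exists_walk_length_eq_dist
  have hnil : ¬p.Nil := fun hnil => h.ne (Subtype.ext hnil.eq)
  let c : G.GeodesicOrder v := ⟨p.snd, a.2.trans (p.adj_snd hnil).reachable⟩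
  have hac : G.dist a.1 c.1 = 1 := dist_eq_one_iff_adj.2 (p.adj_snd hnil)
  have hcb : G.dist c.1 b.1 + 1 ≤ G.dist a.1 b.1 := by
    rw [← hp, ← p.length_tail_add_one hnil]
    exact Nat.add_le_add_right (dist_le _) 1
  have hvc := a.2.dist_triangle_left c.1
  have hvb := c.2.dist_triangle_left b.1
  have hab := le_def.1 h.le
  have hc : G.dist v c.1 = G.dist v a.1 + 1 := by omega
  refine ⟨c, ⟨?_, fun x hax hxc => ?_⟩, p.adj_snd hnil, ?_⟩
  · refine lt_of_le_of_ne (le_def.2 (by omega)) fun hac' => ?_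
    rw [← hac'] at hc
    omega
  · have := dist_lt_dist_of_lt hax
    have := dist_lt_dist_of_lt hxc
    omega
  · exact le_def.2 (le_antisymm (by omega) hvb)

instance : IsStronglyAtomic (G.GeodesicOrder v) :=
  ⟨fun _ _ h => let ⟨c, hac, _, hcb⟩ := exists_covBy_adj_le h; ⟨c, hac, hcb⟩⟩

lemma adj_of_covBy {a b : G.GeodesicOrder v} (h : a ⋖ b) : G.Adj a.1 b.1 := by
  obtain ⟨c, hac, hadj, hcb⟩ := exists_covBy_adj_le h.lt
  obtain rfl | hcb := hcb.eq_or_lt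
  · exact hadj
  · exact (h.2 hac.lt hcb).elim

end GeodesicOrder

theorem exists_ray_of_infinite_reachable [G.LocallyFinite] (h : {w | G.Reachable v w}.Infinite) :
    ∃ f : ℕ → V, f 0 = v ∧ f.Injective ∧ ∀ i, G.Adj (f i) (f (i + 1)) := by
  have hcovers (a : G.GeodesicOrder v) : {x | a ⋖ x}.Finite :=
    ((G.neighborSet a.1).toFinite.preimage Subtype.val_injective.injOn).subset
      fun _ hx => GeodesicOrder.adj_of_covBy hx
  let root : G.GeodesicOrder v := ⟨v, .rfl⟩
  have hroot : Ici root = univ := eq_univ_of_forall fun b =>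
    show G.dist v v + G.dist v b.1 = G.dist v b.1 by simp
  have : Infinite (G.GeodesicOrder v) := h.to_subtype
  obtain ⟨f, hf0, hf⟩ := exists_seq_covby_of_forall_covby_finite hcovers (hroot ▸ infinite_univ)
  exact ⟨fun i => (f i).1, by simp only [hf0]; rfl, Subtype.val_injective.comp
    (strictMono_nat_of_lt_succ fun i => (hf i).lt).injective,
    fun i => GeodesicOrder.adj_of_covBy (hf i)⟩

end SimpleGraph

theorem eventually_forall_mem_Icc_int_imp {α : Type*} [Ring α] [LinearOrder α]
    [IsStrictOrderedRing α] [FloorRing α] [TopologicalSpace α] [OrderTopology α] (t : α) :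
    ∀ᶠ s in 𝓝 t, ∀ a : ℤ, s ∈ Icc (a : α) (a + 1) → t ∈ Icc (a : α) (a + 1) := by
  have hlo : (⌈t⌉ : α) - 1 < t := sub_lt_iff_lt_add.2 (Int.ceil_lt_add_one t)
  filter_upwards [Ioo_mem_nhds hlo (Int.lt_floor_add_one t)] with s hs a ha
  have h₁ : a < ⌊t⌋ + 1 := by exact_mod_cast ha.1.trans_lt hs.2
  have h₂ : ⌈t⌉ - 1 < a + 1 := by exact_mod_cast hs.1.trans_le ha.2
  constructor
  · exact (Int.cast_le.2 (Int.lt_add_one_iff.1 h₁)).trans (Int.floor_le t)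
  · exact (Int.le_ceil t).trans (by exact_mod_cast (show ⌈t⌉ ≤ a + 1 by omega))

namespace LatticeShadowing

open SimpleGraph

variable {ξ : ℝ} {K : Set ℂ}

noncomputable def center (ξ : ℝ) (c : ℤ × ℤ) : ℂ :=
  (((2 * (c.1 : ℝ) + 1) * ξ : ℝ) : ℂ) + (((2 * (c.2 : ℝ) + 1) * ξ : ℝ) : ℂ) * Complex.I

def InSquare (ξ : ℝ) (x : ℂ) (c : ℤ × ℤ) : Prop :=
  |(x - center ξ c).re| ≤ ξ ∧ |(x - center ξ c).im| ≤ ξ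

def cellGraph (ξ : ℝ) (K : Set ℂ) : SimpleGraph (ℤ × ℤ) where
  Adj c d := (hasse ℤ □ hasse ℤ).Adj c d ∧ (∃ w ∈ K, InSquare ξ w c) ∧ ∃ w ∈ K, InSquare ξ w d
  symm := ⟨fun _ _ h => ⟨h.1.symm, h.2.2, h.2.1⟩⟩
  loopless := ⟨fun _ h => h.1.ne rfl⟩

lemma cellGraph_adj {c d : ℤ × ℤ} : (cellGraph ξ K).Adj c d ↔
    (hasse ℤ □ hasse ℤ).Adj c d ∧ (∃ w ∈ K, InSquare ξ w c) ∧ ∃ w ∈ K, InSquare ξ w d :=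
  Iff.rfl

noncomputable def cellOf (ξ : ℝ) (x : ℂ) : ℤ × ℤ := (⌊x.re / (2 * ξ)⌋, ⌊x.im / (2 * ξ)⌋)

@[simp] lemma center_re (c : ℤ × ℤ) : (center ξ c).re = (2 * c.1 + 1) * ξ := by simp [center]

@[simp] lemma center_im (c : ℤ × ℤ) : (center ξ c).im = (2 * c.2 + 1) * ξ := by simp [center]

lemma center_injective (hξ : 0 < ξ) : Function.Injective (center ξ) := fun c d h => by
  have h₁ := congrArg Complex.re h
  have h₂ := congrArg Complex.im h
  simp only [center_re, center_im, mul_left_inj' hξ.ne'] at h₁ h₂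
  exact Prod.ext (by simpa using h₁) (by simpa using h₂)

lemma abs_sub_le_iff_div_mem_Icc (hξ : 0 < ξ) (u : ℝ) (a : ℤ) :
    |u - (2 * a + 1) * ξ| ≤ ξ ↔ u / (2 * ξ) ∈ Icc (a : ℝ) (a + 1) := by
  rw [abs_le, mem_Icc, le_div_iff₀ (by positivity), div_le_iff₀ (by positivity)]
  constructor <;> rintro ⟨h₁, h₂⟩ <;> constructor <;> linarith

lemma inSquare_iff (hξ : 0 < ξ) {x : ℂ} {c : ℤ × ℤ} :
    InSquare ξ x c ↔
      x.re / (2 * ξ) ∈ Icc (c.1 : ℝ) (c.1 + 1) ∧ x.im / (2 * ξ) ∈ Icc (c.2 : ℝ) (c.2 + 1) := by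
  simp only [InSquare, Complex.sub_re, Complex.sub_im, center_re, center_im,
    abs_sub_le_iff_div_mem_Icc hξ]

lemma inSquare_cellOf (hξ : 0 < ξ) (x : ℂ) : InSquare ξ x (cellOf ξ x) :=
  (inSquare_iff hξ).2
    ⟨⟨Int.floor_le _, (Int.lt_floor_add_one _).le⟩, ⟨Int.floor_le _, (Int.lt_floor_add_one _).le⟩⟩

lemma norm_sub_center_le {x : ℂ} {c : ℤ × ℤ} (h : InSquare ξ x c) : ‖x - center ξ c‖ ≤ 2 * ξ :=
  (Complex.norm_le_abs_re_add_abs_im _).trans (by linarith [h.1, h.2])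

lemma eventually_inSquare_imp (hξ : 0 < ξ) (x : ℂ) :
    ∀ᶠ y in 𝓝 x, ∀ c, InSquare ξ y c → InSquare ξ x c := by
  have hre := ((Complex.continuous_re.div_const (2 * ξ)).tendsto x).eventually
    (eventually_forall_mem_Icc_int_imp (x.re / (2 * ξ)))
  have him := ((Complex.continuous_im.div_const (2 * ξ)).tendsto x).eventually
    (eventually_forall_mem_Icc_int_imp (x.im / (2 * ξ)))
  filter_upwards [hre, him] with y hy₁ hy₂ c hc
  rw [inSquare_iff hξ] at hc ⊢
  exact ⟨hy₁ c.1 hc.1, hy₂ c.2 hc.2⟩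

lemma eq_or_hasse_adj_of_mem_Icc {t : ℝ} {a b : ℤ} (ha : t ∈ Icc (a : ℝ) (a + 1))
    (hb : t ∈ Icc (b : ℝ) (b + 1)) : a = b ∨ (hasse ℤ).Adj a b := by
  have h₁ : a ≤ b + 1 := by exact_mod_cast ha.1.trans hb.2
  have h₂ : b ≤ a + 1 := by exact_mod_cast hb.1.trans ha.2
  simp only [hasse_adj, Order.covBy_iff_add_one_eq]
  omega

/-- Two cells whose squares share a point of `K` are joined through the cell sharing a row with
one and a column with the other. -/
lemma cellGraph_reachable_of_inSquare (hξ : 0 < ξ) {x : ℂ} (hx : x ∈ K) {c d : ℤ × ℤ}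
    (hc : InSquare ξ x c) (hd : InSquare ξ x d) : (cellGraph ξ K).Reachable c d := by
  have hstep {c d : ℤ × ℤ} (hc : InSquare ξ x c) (hd : InSquare ξ x d)
      (h : c = d ∨ (hasse ℤ □ hasse ℤ).Adj c d) : (cellGraph ξ K).Reachable c d := by
    rcases h with rfl | h
    · rfl
    · exact (cellGraph_adj.2 ⟨h, ⟨x, hx, hc⟩, x, hx, hd⟩).reachable
  rw [inSquare_iff hξ] at hc hd
  have hm : InSquare ξ x (d.1, c.2) := (inSquare_iff hξ).2 ⟨hd.1, hc.2⟩
  refine (hstep ((inSquare_iff hξ).2 hc) hm ?_).trans (hstep hm ((inSquare_iff hξ).2 hd) ?_)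
  · rcases eq_or_hasse_adj_of_mem_Icc hc.1 hd.1 with h | h
    · exact .inl (Prod.ext h rfl)
    · exact .inr (boxProd_adj.2 (.inl ⟨h, rfl⟩))
  · rcases eq_or_hasse_adj_of_mem_Icc hc.2 hd.2 with h | h
    · exact .inl (Prod.ext rfl h)
    · exact .inr (boxProd_adj.2 (.inr ⟨h, rfl⟩))

lemma cellGraph_reachable_cellOf (hξ : 0 < ξ) (hK : IsPreconnected K) {x y : ℂ} (hx : x ∈ K)
    (hy : y ∈ K) : (cellGraph ξ K).Reachable (cellOf ξ x) (cellOf ξ y) := by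
  refine hK.induction₂ (fun x y => (cellGraph ξ K).Reachable (cellOf ξ x) (cellOf ξ y))
    (fun x hx => ?_) (fun _ _ _ _ _ _ => Reachable.trans) (fun _ _ _ _ => Reachable.symm) hx hy
  filter_upwards [nhdsWithin_le_nhds (eventually_inSquare_imp hξ x), self_mem_nhdsWithin]
    with y hy hyK
  exact cellGraph_reachable_of_inSquare hξ hx (inSquare_cellOf hξ x) (hy _ (inSquare_cellOf hξ y))

lemma infinite_setOf_cellGraph_reachable (hξ : 0 < ξ) (hK : IsPreconnected K)
    (hKunbdd : ¬Bornology.IsBounded K) {q : ℂ} (hq : q ∈ K) :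
    {c | (cellGraph ξ K).Reachable (cellOf ξ q) c}.Infinite := by
  intro hfin
  obtain ⟨M, hM⟩ := (hfin.image fun c => ‖center ξ c‖).bddAbove
  obtain ⟨w, hwK, hw⟩ : ∃ w ∈ K, M + 2 * ξ < ‖w‖ := by
    by_contra! h
    exact hKunbdd (isBounded_iff_forall_norm_le.2 ⟨_, h⟩)
  have hcenter : ‖center ξ (cellOf ξ w)‖ ≤ M :=
    hM (mem_image_of_mem _ (cellGraph_reachable_cellOf hξ hK hq hwK))
  have := norm_sub_center_le (inSquare_cellOf hξ w)
  have := norm_le_norm_add_norm_sub' w (center ξ (cellOf ξ w))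
  linarith

lemma finite_setOf_hasse_boxProd_adj (c : ℤ × ℤ) : {d | (hasse ℤ □ hasse ℤ).Adj c d}.Finite :=
  (finite_Icc (c - 1) (c + 1)).subset fun d hd => by
    simp only [mem_ofPred_eq, boxProd_adj, hasse_adj, Order.covBy_iff_add_one_eq] at hd
    simp only [mem_Icc, Prod.le_def, Prod.fst_sub, Prod.snd_sub, Prod.fst_add, Prod.snd_add,
      Prod.fst_one, Prod.snd_one]
    omega

noncomputable instance : (cellGraph ξ K).LocallyFinite := fun c =>
  ((finite_setOf_hasse_boxProd_adj c).subset fun _ hd => (cellGraph_adj.1 hd).1).fintype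

lemma center_sub_center_mem {c d : ℤ × ℤ} (h : (hasse ℤ □ hasse ℤ).Adj c d) :
    center ξ d - center ξ c ∈ ({((2 * ξ : ℝ) : ℂ), ((-(2 * ξ) : ℝ) : ℂ),
      ((2 * ξ : ℝ) : ℂ) * Complex.I, ((-(2 * ξ) : ℝ) : ℂ) * Complex.I} : Set ℂ) := by
  obtain ⟨c₁, c₂⟩ := c
  obtain ⟨d₁, d₂⟩ := d
  simp only [boxProd_adj, hasse_adj, Order.covBy_iff_add_one_eq] at h
  rcases h with ⟨rfl | rfl, rfl⟩ | ⟨rfl | rfl, rfl⟩ <;> simp only [center] <;> push_cast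
  · exact .inl (by ring)
  · exact .inr (.inl (by ring))
  · exact .inr (.inr (.inl (by ring)))
  · exact .inr (.inr (.inr (mem_singleton_iff.2 (by ring))))

lemma mul_norm_le_norm_center (hξ : 0 ≤ ξ) (c : ℤ × ℤ) : ξ * ‖c‖ ≤ ‖center ξ c‖ := by
  have key (a : ℤ) (z : ℝ) (hz : |(2 * a + 1) * ξ| ≤ z) : ξ * ‖a‖ ≤ z := by
    have : |a| ≤ |2 * a + 1| := by cases abs_cases a <;> cases abs_cases (2 * a + 1) <;> omega
    have : |(a : ℝ)| ≤ |2 * (a : ℝ) + 1| := by exact_mod_cast this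
    rw [abs_mul, abs_of_nonneg hξ] at hz
    rw [Int.norm_eq_abs, mul_comm]
    nlinarith
  rw [Prod.norm_def, mul_max_of_nonneg _ _ hξ]
  refine max_le (key _ _ ?_) (key _ _ ?_)
  · simpa using Complex.abs_re_le_norm (center ξ c)
  · simpa using Complex.abs_im_le_norm (center ξ c)

lemma tendsto_norm_center (hξ : 0 < ξ) : Tendsto (fun c => ‖center ξ c‖) cofinite atTop := by
  refine tendsto_atTop_mono (mul_norm_le_norm_center hξ.le) (Tendsto.const_mul_atTop hξ ?_)
  rw [← cocompact_eq_cofinite]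
  exact tendsto_norm_cocompact_atTop

end LatticeShadowing

open LatticeShadowing

/-- Lemma 4.22 of the paper, in abstract form: any connected unbounded set `K ⊆ ℂ` can be
shadowed, starting near any of its points `q`, by an infinite self-avoiding
nearest-neighbor path on the shifted lattice `Λ′ = {(2a+1)ξ + (2b+1)ξ·i}` each of whose
mesh squares meets `K`, and which escapes to infinity. -/
theorem lattice_path_shadowing
    (ξ : ℝ) (hξ : 0 < ξ) (K : Set ℂ) (hKconn : IsPreconnected K)
    (hKunbdd : ¬ Bornology.IsBounded K) (q : ℂ) (hq : q ∈ K) :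
    ∃ z : ℕ → ℂ,
      Function.Injective z ∧
      (∀ k, ∃ a b : ℤ, z k = (((2 * (a : ℝ) + 1) * ξ : ℝ) : ℂ) +
        (((2 * (b : ℝ) + 1) * ξ : ℝ) : ℂ) * Complex.I) ∧
      ‖z 0 - q‖ ≤ 2 * ξ ∧
      (∀ k, z (k + 1) - z k ∈
        ({((2 * ξ : ℝ) : ℂ), ((-(2 * ξ) : ℝ) : ℂ),
          ((2 * ξ : ℝ) : ℂ) * Complex.I, ((-(2 * ξ) : ℝ) : ℂ) * Complex.I} : Set ℂ)) ∧
      (∀ k, ∃ w ∈ K, |(w - z k).re| ≤ ξ ∧ |(w - z k).im| ≤ ξ) ∧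
      Tendsto (fun k => ‖z k‖) atTop atTop := by
  obtain ⟨f, hf0, hfinj, hfadj⟩ := (cellGraph ξ K).exists_ray_of_infinite_reachable _
    (infinite_setOf_cellGraph_reachable hξ hKconn hKunbdd hq)
  refine ⟨center ξ ∘ f, (center_injective hξ).comp hfinj, fun k => ⟨_, _, rfl⟩, ?_,
    fun k => center_sub_center_mem (cellGraph_adj.1 (hfadj k)).1,
    fun k => (cellGraph_adj.1 (hfadj k)).2.1, ?_⟩
  · rw [Function.comp_apply, hf0, norm_sub_rev]
    exact norm_sub_center_le (inSquare_cellOf hξ q)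
  · rw [← Nat.cofinite_eq_atTop]
    exact (tendsto_norm_center hξ).comp hfinj.tendsto_cofinite
end

section
/- For every C₀ ≥ 1 there exist C > 0 and N ∈ ℕ with the following property. Let n ≥ N be an integer, let M, N′ be integers with 1 ≤ M, N′ ≤ C₀·n, let d_{−M} < ⋯ < d_{N′} be integers with |d_i| ≤ C₀·n, and let x₂, t₂ be integers with |x₂| ≤ C₀·n and 1 ≤ t₂ ≤ C₀·n. Define, for z in the open upper half-plane ℍ, R(z) := (1/n)·∑_{i=−M}^{N′} log|z − d_i/n| + (1/n)·∑_{i=−x₂+1}^{−x₂+t₂−1} log|z + i/n| − (1/n)·log|sin(π n z)| (note sin(π n z) ≠ 0 for z ∈ ℍ). Then for every z ∈ ℍ with |z| > n, |R(z) + π·Im z| ≤ C·( max(0, −n^{−1}·log(min_{i ∈ ℤ} |nz − i|)) + log|z| ). -/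
/-!
The identity `‖sin (x + y i)‖² = sin² x + sinh² y` controls the sine term: it gives
`log ‖sin (π v)‖ ≤ π Im v`, the reverse inequality up to `log 4` once `π Im v ≥ 1`, and, after
translating `v` by the nearest integer and applying Jordan's inequality, `‖sin (π v)‖ ≥ dist(v, ℤ)`
for small `Im v`. Each of the `O(n)` terms `log ‖z - a‖` with `‖a‖ ≤ ‖z‖ / 2` is `O(log ‖z‖)`,
so the normalised sums are `O(log ‖z‖)` as well.
-/

open Real

namespace Complex

lemma sq_norm_sin (w : ℂ) : ‖sin w‖ ^ 2 = Real.sin w.re ^ 2 + Real.sinh w.im ^ 2 := by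
  conv_lhs => rw [← w.re_add_im]
  rw [sin_add_mul_I, ← ofReal_sin, ← ofReal_cos, ← ofReal_sinh, ← ofReal_cosh, ← ofReal_mul,
    ← ofReal_mul, norm_add_mul_I, Real.sq_sqrt (by positivity)]
  linear_combination Real.sin w.re ^ 2 * Real.cosh_sq w.im +
    Real.sinh w.im ^ 2 * Real.sin_sq_add_cos_sq w.re

lemma norm_sin_le_exp_im {w : ℂ} (hw : 0 ≤ w.im) : ‖sin w‖ ≤ Real.exp w.im := by
  have hcosh : Real.cosh w.im ≤ Real.exp w.im := by
    rw [← sub_nonneg, Real.exp_sub_cosh]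
    exact Real.sinh_nonneg_iff.2 hw
  have hsq : ‖sin w‖ ^ 2 ≤ Real.exp w.im ^ 2 := by
    rw [sq_norm_sin]
    nlinarith [Real.sin_sq_le_one w.re, Real.cosh_sq w.im, Real.cosh_pos w.im]
  exact (pow_le_pow_iff_left₀ (norm_nonneg _) (Real.exp_pos _).le two_ne_zero).1 hsq

lemma abs_sinh_im_le_norm_sin (w : ℂ) : |Real.sinh w.im| ≤ ‖sin w‖ := by
  have hsq : Real.sinh w.im ^ 2 ≤ ‖sin w‖ ^ 2 := by
    rw [sq_norm_sin]
    nlinarith [sq_nonneg (Real.sin w.re)]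
  simpa using sq_le_sq.1 hsq

lemma norm_le_norm_sin_pi_mul {u : ℂ} (hu : |u.re| ≤ 1 / 2) : ‖u‖ ≤ ‖sin (π * u)‖ := by
  have hre : |u.re| ≤ |Real.sin (π * u.re)| := by
    have hjordan := Real.mul_abs_le_abs_sin (x := π * u.re) (by
      rw [abs_mul, abs_of_pos pi_pos]; nlinarith [pi_pos])
    rw [abs_mul, abs_of_pos pi_pos, ← mul_assoc, div_mul_cancel₀ _ pi_ne_zero] at hjordan
    linarith [abs_nonneg u.re]
  have him : |u.im| ≤ |Real.sinh (π * u.im)| := by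
    rw [Real.abs_sinh, abs_mul, abs_of_pos pi_pos]
    calc |u.im| ≤ π * |u.im| := le_mul_of_one_le_left (abs_nonneg _) (by linarith [pi_gt_three])
      _ ≤ Real.sinh (π * |u.im|) := Real.self_le_sinh_iff.2 (by positivity)
  have hsq : ‖u‖ ^ 2 ≤ ‖sin (π * u)‖ ^ 2 := by
    rw [sq_norm_sin, ← normSq_eq_norm_sq, normSq_apply]
    simp only [mul_re, mul_im, ofReal_re, ofReal_im, zero_mul, sub_zero, add_zero]
    nlinarith [sq_le_sq.2 hre, sq_le_sq.2 him]
  exact (pow_le_pow_iff_left₀ (norm_nonneg _) (norm_nonneg _) two_ne_zero).1 hsq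

lemma norm_sin_pi_mul_sub_intCast (v : ℂ) (m : ℤ) : ‖sin (π * (v - m))‖ = ‖sin (π * v)‖ := by
  rw [mul_sub, mul_comm (π : ℂ) m, sin_antiperiodic.sub_int_mul_eq]
  simp

lemma abs_im_le_iInf_norm_sub_intCast (v : ℂ) : |v.im| ≤ ⨅ i : ℤ, ‖v - i‖ :=
  le_ciInf fun i => by simpa using abs_im_le_norm (v - i)

lemma iInf_norm_sub_intCast_le_norm_sin_pi_mul (v : ℂ) : ⨅ i : ℤ, ‖v - i‖ ≤ ‖sin (π * v)‖ := by
  have hbdd : BddBelow (Set.range fun i : ℤ => ‖v - i‖) := ⟨0, by rintro _ ⟨i, rfl⟩; positivity⟩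
  calc ⨅ i : ℤ, ‖v - i‖ ≤ ‖v - round v.re‖ := ciInf_le hbdd _
    _ ≤ ‖sin (π * (v - round v.re))‖ :=
        norm_le_norm_sin_pi_mul (by simpa using abs_sub_round v.re)
    _ = ‖sin (π * v)‖ := norm_sin_pi_mul_sub_intCast v _

end Complex

lemma Real.exp_div_four_le_sinh {t : ℝ} (ht : 1 ≤ t) : Real.exp t / 4 ≤ Real.sinh t := by
  have h2 : 2 ≤ Real.exp t := by linarith [Real.add_one_le_exp t]
  have h1 : Real.exp (-t) ≤ 1 := Real.exp_le_one_iff.2 (by linarith)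
  rw [Real.sinh_eq]
  linarith

lemma Real.log_four_lt_two : Real.log 4 < 2 := by
  rw [Real.log_four_eq]
  linarith [Real.log_two_lt_d9]

lemma abs_log_norm_sin_pi_mul_sub_le {v : ℂ} (hv : 0 < v.im) :
    |log ‖Complex.sin (π * v)‖ - π * v.im| ≤ max 0 (-log (⨅ i : ℤ, ‖v - i‖)) + 2 := by
  set I := ⨅ i : ℤ, ‖v - i‖
  have hI : 0 < I := hv.trans_le ((le_abs_self _).trans (Complex.abs_im_le_iInf_norm_sub_intCast v))
  have hIsin : I ≤ ‖Complex.sin (π * v)‖ := Complex.iInf_norm_sub_intCast_le_norm_sin_pi_mul v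
  have hsin : 0 < ‖Complex.sin (π * v)‖ := hI.trans_le hIsin
  have him : (π * v).im = π * v.im := by simp
  have hupper : log ‖Complex.sin (π * v)‖ ≤ π * v.im := by
    rw [log_le_iff_le_exp hsin, ← him]
    exact Complex.norm_sin_le_exp_im (by rw [him]; positivity)
  have hlower : π * v.im - 2 - max 0 (-log I) ≤ log ‖Complex.sin (π * v)‖ := by
    rcases le_or_gt 1 (π * v.im) with hbig | hsmall
    · have hsinh : exp (π * v.im) / 4 ≤ ‖Complex.sin (π * v)‖ := by
        calc exp (π * v.im) / 4 ≤ Real.sinh (π * v.im) := exp_div_four_le_sinh hbig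
          _ ≤ |Real.sinh (π * v).im| := by rw [him]; exact le_abs_self _
          _ ≤ ‖Complex.sin (π * v)‖ := Complex.abs_sinh_im_le_norm_sin _
      have := log_le_log (by positivity) hsinh
      rw [log_div (exp_pos _).ne' (by norm_num), log_exp] at this
      linarith [log_four_lt_two, le_max_left 0 (-log I)]
    · linarith [log_le_log hI hIsin, le_max_right 0 (-log I)]
  rw [abs_le]
  constructor <;> linarith [le_max_left 0 (-log I)]

lemma abs_log_norm_sub_le_two_mul_log {E : Type*} [SeminormedAddCommGroup E] {z a : E}
    (hz : 2 ≤ ‖z‖) (ha : ‖a‖ ≤ ‖z‖ / 2) : |Real.log ‖z - a‖| ≤ 2 * Real.log ‖z‖ := by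
  have hlow : ‖z‖ / 2 ≤ ‖z - a‖ := by linarith [norm_sub_norm_le z a]
  have hup : ‖z - a‖ ≤ ‖z‖ ^ 2 := by nlinarith [norm_sub_le z a]
  have h0 : 0 ≤ Real.log ‖z - a‖ := Real.log_nonneg (by linarith)
  have h1 : Real.log ‖z - a‖ ≤ Real.log (‖z‖ ^ 2) := Real.log_le_log (by linarith) hup
  rw [abs_of_nonneg h0]
  simpa using h1

lemma abs_sum_log_norm_sub_le {ι E : Type*} [SeminormedAddCommGroup E] (s : Finset ι) {z : E}
    (a : ι → E) (hz : 2 ≤ ‖z‖) (ha : ∀ i ∈ s, ‖a i‖ ≤ ‖z‖ / 2) :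
    |∑ i ∈ s, Real.log ‖z - a i‖| ≤ s.card * (2 * Real.log ‖z‖) := by
  calc |∑ i ∈ s, Real.log ‖z - a i‖| ≤ ∑ i ∈ s, |Real.log ‖z - a i‖| := s.abs_sum_le_sum_abs _
    _ ≤ s.card • (2 * Real.log ‖z‖) :=
        s.sum_le_card_nsmul _ _ fun i hi => abs_log_norm_sub_le_two_mul_log hz (ha i hi)
    _ = s.card * (2 * Real.log ‖z‖) := nsmul_eq_mul _ _

lemma abs_div_mul_sum_log_norm_sub_le {ι : Type*} {n : ℕ} (hn : 0 < n) (s : Finset ι) {z : ℂ}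
    (a : ι → ℂ) {K : ℝ} (hz : 2 ≤ ‖z‖) (ha : ∀ i ∈ s, ‖a i‖ ≤ ‖z‖ / 2)
    (hs : (s.card : ℝ) ≤ K * n) :
    |1 / (n : ℝ) * ∑ i ∈ s, Real.log ‖z - a i‖| ≤ 2 * K * Real.log ‖z‖ := by
  have hn' : (0 : ℝ) < n := by exact_mod_cast hn
  have hlog : 0 ≤ Real.log ‖z‖ := Real.log_nonneg (by linarith)
  rw [abs_mul, abs_of_pos (by positivity)]
  calc 1 / (n : ℝ) * |∑ i ∈ s, Real.log ‖z - a i‖| ≤ 1 / n * (s.card * (2 * Real.log ‖z‖)) :=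
        by gcongr; exact abs_sum_log_norm_sub_le s a hz ha
    _ ≤ 1 / n * (K * n * (2 * Real.log ‖z‖)) := by gcongr
    _ = 2 * K * Real.log ‖z‖ := by field_simp

lemma abs_pi_mul_im_sub_log_norm_sin_div_le {n : ℕ} (hn : 0 < n) {z : ℂ} (hz : 0 < z.im) :
    |π * z.im - (1 / (n : ℝ)) * Real.log ‖Complex.sin (π * n * z)‖| ≤
      max 0 (-(1 / (n : ℝ)) * Real.log (⨅ i : ℤ, ‖(n : ℂ) * z - i‖)) + 2 / n := by
  have hn' : (0 : ℝ) < n := by exact_mod_cast hn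
  have hv := abs_log_norm_sin_pi_mul_sub_le (v := n * z) (by simpa using mul_pos hn' hz)
  have hrw : π * z.im - (1 / (n : ℝ)) * Real.log ‖Complex.sin (π * n * z)‖ =
      -((Real.log ‖Complex.sin (π * (n * z))‖ - π * ((n : ℂ) * z).im) / n) := by
    simp only [mul_assoc, Complex.mul_im, Complex.natCast_re, Complex.natCast_im, zero_mul, add_zero]
    field_simp
    ring
  have hmax : max 0 (-(1 / (n : ℝ)) * Real.log (⨅ i : ℤ, ‖(n : ℂ) * z - i‖)) =
      max 0 (-Real.log (⨅ i : ℤ, ‖(n : ℂ) * z - i‖)) / n := by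
    rw [← max_div_div_right hn'.le, zero_div]
    ring_nf
  rw [hrw, abs_neg, abs_div, abs_of_pos hn', hmax, ← add_div]
  exact div_le_div_of_nonneg_right hv hn'.le

lemma norm_intCast_div_natCast_le {n : ℕ} (hn : 0 < n) {k : ℤ} {K : ℝ} (hk : |(k : ℝ)| ≤ K * n) :
    ‖(k : ℂ) / (n : ℂ)‖ ≤ K := by
  rw [norm_div, Complex.norm_intCast, Complex.norm_natCast, div_le_iff₀ (by exact_mod_cast hn)]
  exact hk

/-- Lemma 4.13 (real-part content) of the paper: for `|z| > n` in the upper half-plane,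
the real part `R(z)` of the key function `D₂(z)` (with its exactly linear terms removed)
is approximated by `−π·Im z`, up to an error controlled by `log|z|` and the distance from
`nz` to the integer lattice. -/
theorem key_function_large_z_bound
    (C₀ : ℝ) (hC₀ : 1 ≤ C₀) :
    ∃ C : ℝ, 0 < C ∧ ∃ N₀ : ℕ, ∀ n : ℕ, N₀ ≤ n →
      ∀ M N' : ℤ, 1 ≤ M → 1 ≤ N' → (M : ℝ) ≤ C₀ * n → (N' : ℝ) ≤ C₀ * n →
      ∀ d : ℤ → ℤ, StrictMonoOn d (Set.Icc (-M) N') →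
        (∀ i ∈ Set.Icc (-M) N', |(d i : ℝ)| ≤ C₀ * n) →
      ∀ x₂ t₂ : ℤ, |(x₂ : ℝ)| ≤ C₀ * n → 1 ≤ t₂ → (t₂ : ℝ) ≤ C₀ * n →
      ∀ z : ℂ, 0 < z.im → (n : ℝ) < ‖z‖ →
        |(1 / (n : ℝ)) * ∑ i ∈ Finset.Icc (-M) N',
              Real.log (‖z - (d i : ℂ) / (n : ℂ)‖) +
            (1 / (n : ℝ)) * ∑ i ∈ Finset.Icc (-x₂ + 1) (-x₂ + t₂ - 1),
              Real.log (‖z + (i : ℂ) / (n : ℂ)‖) -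
            (1 / (n : ℝ)) * Real.log (‖Complex.sin ((Real.pi : ℂ) * n * z)‖) +
            Real.pi * z.im| ≤
          C * (max 0 (-(1 / (n : ℝ)) *
              Real.log (⨅ i : ℤ, ‖(n : ℂ) * z - (i : ℂ)‖)) +
            Real.log ‖z‖) := by
  -- `n ≥ 4 C₀` keeps every `d i / n` and `i / n` within `‖z‖ / 2`, and forces `log ‖z‖ ≥ 1`.
  refine ⟨8 * C₀ + 2, by linarith, ⌈4 * C₀⌉₊, fun n hn M N' hM hN' hMn hN'n d _ hd x₂ t₂ hx₂ ht₂
    ht₂n z hz hnz => ?_⟩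
  have hn4 : 4 * C₀ ≤ n := Nat.ceil_le.1 hn
  have hn0 : 0 < n := by exact_mod_cast (by linarith : (0 : ℝ) < n)
  have hlog : 1 ≤ Real.log ‖z‖ := by
    rw [Real.le_log_iff_exp_le (by linarith)]
    linarith [Real.exp_one_lt_d9]
  have hcardA : ((Finset.Icc (-M) N').card : ℝ) ≤ 3 * C₀ * n := by
    rw [← Int.cast_natCast, Int.card_Icc_of_le _ _ (by omega)]; push_cast; nlinarith
  have hcardB : ((Finset.Icc (-x₂ + 1) (-x₂ + t₂ - 1)).card : ℝ) ≤ C₀ * n := by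
    rw [← Int.cast_natCast, Int.card_Icc_of_le _ _ (by omega)]; push_cast; linarith
  have hA := abs_div_mul_sum_log_norm_sub_le hn0 _ (fun i => (d i : ℂ) / n) (by linarith)
    (fun i hi => (norm_intCast_div_natCast_le hn0 (hd i (Finset.mem_Icc.1 hi))).trans
      (by linarith)) hcardA
  have hB := abs_div_mul_sum_log_norm_sub_le hn0 _ (fun i : ℤ => -((i : ℂ) / n)) (by linarith)
    (fun i hi => by
      obtain ⟨hi₁, hi₂⟩ := Finset.mem_Icc.1 hi
      rw [norm_neg]
      refine (norm_intCast_div_natCast_le hn0 (K := 2 * C₀) ?_).trans (by linarith)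
      rw [abs_le] at hx₂ ⊢
      constructor <;> push_cast [← Int.cast_le (R := ℝ)] at hi₁ hi₂ <;> linarith) hcardB
  simp only [sub_neg_eq_add] at hB
  have hS := abs_pi_mul_im_sub_log_norm_sin_div_le hn0 hz
  have hn2 : 2 / (n : ℝ) ≤ 2 := by rw [div_le_iff₀ (by exact_mod_cast hn0)]; linarith
  rw [show ∀ a b c e : ℝ, a + b - c + e = a + b + (e - c) from fun _ _ _ _ => by ring]
  refine (abs_add_three _ _ _).trans ?_
  nlinarith [le_max_left 0 (-(1 / (n : ℝ)) * Real.log (⨅ i : ℤ, ‖(n : ℂ) * z - (i : ℂ)‖))]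
end
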